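/- Let Q be a set of connected X-labeled graphs and let G_α, G_{β1}, G_{β2} be t-boundaried X-labeled graphs such that folio*_{Q,t}(G_{β1}) ⊆ folio*_{Q,t}(G_{β2}). Then folio*_{Q,t}(G_α ⊕ G_{β1}) ⊆ folio*_{Q,t}(G_α ⊕ G_{β2}). Moreover, if folio*_{Q,t}(G_{β1}) = folio*_{Q,t}(G_{β2}), then folio*_{Q,t}(G_α ⊕ G_{β1}) = folio*_{Q,t}(G_α ⊕ G_{β2}). -/

import Mathlib

namespace FDel

open scoped Classical

noncomputable section

/-- A boundaried `X`-labeled graph on the vertex universe `ℕ`: a (finite) vertex set,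
a symmetric loopless adjacency relation, a labelset for each vertex, and a partial
assignment of boundary indices to vertices. -/
structure BLG (X : Type) where
  verts : Set ℕ
  Adj : ℕ → ℕ → Prop
  label : ℕ → Set X
  bnd : ℕ → Option ℕ

variable {X : Type}

/-- Well-formedness of `G` as a `t`-boundaried `X`-labeled graph: the vertex set is finite,
adjacency is symmetric, loopless and supported on the vertex set, labels and boundary
indices live on vertices, the boundary assignment is injective, and indices lie in `{1,…,t}`. -/
def BLG.WF (t : ℕ) (G : BLG X) : Prop :=
  G.verts.Finite ∧
  (∀ u v, G.Adj u v → G.Adj v u) ∧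
  (∀ v, ¬ G.Adj v v) ∧
  (∀ u v, G.Adj u v → u ∈ G.verts ∧ v ∈ G.verts) ∧
  (∀ v, v ∉ G.verts → G.label v = ∅ ∧ G.bnd v = none) ∧
  (∀ u v i, G.bnd u = some i → G.bnd v = some i → u = v) ∧
  (∀ v i, G.bnd v = some i → v ∈ G.verts ∧ 1 ≤ i ∧ i ≤ t)

/-- Reachability inside the vertex set `S`. -/
def ReachIn (G : BLG X) (S : Set ℕ) (a b : ℕ) : Prop :=
  Relation.ReflTransGen (fun u v => G.Adj u v ∧ u ∈ S ∧ v ∈ S) a b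

/-- `C` is (the vertex set of) a connected component of the subgraph of `G` induced by `S`. -/
def IsCompOf (G : BLG X) (S C : Set ℕ) : Prop :=
  ∃ v ∈ S, C = {w | w ∈ S ∧ ReachIn G S v w}

/-- `G` is connected (and nonempty). -/
def BLG.Conn (G : BLG X) : Prop :=
  G.verts.Nonempty ∧ ∀ a ∈ G.verts, ∀ b ∈ G.verts, ReachIn G G.verts a b

/-- Isomorphism of boundaried labeled graphs: a bijection of the vertex sets preserving
adjacency, labelsets and boundary indices. -/
def Iso (G G' : BLG X) : Prop :=
  ∃ f : ℕ → ℕ, Set.BijOn f G.verts G'.verts ∧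
    (∀ u ∈ G.verts, ∀ v ∈ G.verts, (G.Adj u v ↔ G'.Adj (f u) (f v))) ∧
    (∀ v ∈ G.verts, G'.label (f v) = G.label v) ∧
    (∀ v ∈ G.verts, G'.bnd (f v) = G.bnd v)

/-- A boundaried labeled minor model of `H` in `G`. -/
structure MinorModel (H G : BLG X) (φ : ℕ → Set ℕ) : Prop where
  sub : ∀ v ∈ H.verts, φ v ⊆ G.verts
  nonempty : ∀ v ∈ H.verts, (φ v).Nonempty
  conn : ∀ v ∈ H.verts, ∀ a ∈ φ v, ∀ b ∈ φ v, ReachIn G (φ v) a b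
  disj : ∀ u ∈ H.verts, ∀ v ∈ H.verts, u ≠ v → Disjoint (φ u) (φ v)
  edge : ∀ u ∈ H.verts, ∀ v ∈ H.verts, H.Adj u v → ∃ a ∈ φ u, ∃ b ∈ φ v, G.Adj a b
  bnd_none : ∀ v ∈ H.verts, H.bnd v = none → ∀ a ∈ φ v, G.bnd a = none
  bnd_some : ∀ v ∈ H.verts, ∀ i, H.bnd v = some i →
    (∀ a ∈ φ v, G.bnd a = none ∨ G.bnd a = some i) ∧ ∃ a ∈ φ v, G.bnd a = some i
  labels : ∀ v ∈ H.verts, ∀ x, x ∈ H.label v → ∃ a ∈ φ v, x ∈ G.label a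

/-- `H` is a boundaried labeled minor of `G`. -/
def Minor (H G : BLG X) : Prop := ∃ φ, MinorModel H G φ

/-- Auxiliary injection for the right summand of `⊕`: a vertex of `G2` that is a boundary
vertex whose index also occurs in `G1` is identified with the corresponding vertex of `G1`. -/
def rmap (G1 G2 : BLG X) (v : ℕ) : ℕ :=
  if h : ∃ u, u ∈ G1.verts ∧ ∃ i, G2.bnd v = some i ∧ G1.bnd u = some i
  then 2 * Classical.choose h
  else 2 * v + 1

/-- The sum `G1 ⊕ G2`: disjoint union with boundary vertices of equal index identified. -/
def glue (G1 G2 : BLG X) : BLG X where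
  verts := (fun v => 2 * v) '' G1.verts ∪ rmap G1 G2 '' G2.verts
  Adj a b :=
    (∃ u ∈ G1.verts, ∃ v ∈ G1.verts, G1.Adj u v ∧ a = 2 * u ∧ b = 2 * v) ∨
    (∃ u ∈ G2.verts, ∃ v ∈ G2.verts, G2.Adj u v ∧ a = rmap G1 G2 u ∧ b = rmap G1 G2 v)
  label x := {l | (∃ v ∈ G1.verts, x = 2 * v ∧ l ∈ G1.label v) ∨
                  (∃ v ∈ G2.verts, x = rmap G1 G2 v ∧ l ∈ G2.label v)}
  bnd x :=
    if x ∈ (fun v => 2 * v) '' G1.verts ∪ rmap G1 G2 '' G2.verts then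
      (if x % 2 = 0 then G1.bnd (x / 2) else G2.bnd (x / 2))
    else none

/-- One-vertex piece on vertex `v`, with boundary index `i` and labelset `L`. -/
def singlePc (v i : ℕ) (L : Set X) : BLG X :=
  ⟨{v}, fun _ _ => False, fun x => if x = v then L else ∅,
   fun x => if x = v then some i else none⟩

/-- Two-vertex piece consisting of the single edge `{u,v}` with boundary indices `i`, `j`. -/
def edgePc (u v i j : ℕ) : BLG X :=
  ⟨{u, v}, fun a b => (a = u ∧ b = v) ∨ (a = v ∧ b = u), fun _ => ∅,
   fun x => if x = u then some i else if x = v then some j else none⟩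

/-- The non-boundary vertices of `G`. -/
def interior (G : BLG X) : Set ℕ := {v | v ∈ G.verts ∧ G.bnd v = none}

/-- The piece of `G` corresponding to a connected component `C` of `G − δ(G)`: `C` together
with its neighboring boundary vertices, with edges between boundary vertices removed and all
labels removed from boundary vertices. -/
def compPc (G : BLG X) (C : Set ℕ) : BLG X :=
  ⟨C ∪ {v | v ∈ G.verts ∧ G.bnd v ≠ none ∧ ∃ c ∈ C, G.Adj v c},
   fun a b => G.Adj a b ∧
     (a ∈ C ∪ {v | v ∈ G.verts ∧ G.bnd v ≠ none ∧ ∃ c ∈ C, G.Adj v c}) ∧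
     (b ∈ C ∪ {v | v ∈ G.verts ∧ G.bnd v ≠ none ∧ ∃ c ∈ C, G.Adj v c}) ∧
     ¬(G.bnd a ≠ none ∧ G.bnd b ≠ none),
   fun x => if x ∈ C then G.label x else ∅,
   fun x => if x ∈ C ∪ {v | v ∈ G.verts ∧ G.bnd v ≠ none ∧ ∃ c ∈ C, G.Adj v c}
            then G.bnd x else none⟩

/-- The set of pieces of `G`. -/
def pcs (G : BLG X) : Set (BLG X) :=
  {p | ∃ v ∈ G.verts, ∃ i, G.bnd v = some i ∧ p = singlePc v i (∅ : Set X)} ∪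
  {p | ∃ v ∈ G.verts, ∃ i, G.bnd v = some i ∧ ∃ l ∈ G.label v, p = singlePc v i {l}} ∪
  {p | ∃ u v i j, G.Adj u v ∧ G.bnd u = some i ∧ G.bnd v = some j ∧ p = edgePc u v i j} ∪
  {p | ∃ C, IsCompOf G (interior G) C ∧ p = compPc G C}

/-- The sum `⊕_{p ∈ P} p` of a set of pieces of a common graph; since pieces of a common
graph overlap exactly in boundary vertices (with equal indices), the sum is the union. -/
def unionOf (P : Set (BLG X)) : BLG X :=
  ⟨⋃ p ∈ P, p.verts,
   fun a b => ∃ p ∈ P, p.Adj a b,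
   fun x => ⋃ p ∈ P, p.label x,
   fun x => if h : ∃ p, p ∈ P ∧ p.bnd x ≠ none then (Classical.choose h).bnd x else none⟩

/-- `mpcs(G)`: all sums of nonempty subsets of the pieces of `G`, up to isomorphism. -/
def mpcs (G : BLG X) : Set (BLG X) :=
  {H | ∃ P ⊆ pcs G, P.Nonempty ∧ Iso H (unionOf P)}

/-- `mpcs` of a set of graphs. -/
def mpcsSet (S : Set (BLG X)) : Set (BLG X) := ⋃ G ∈ S, mpcs G

/-- Assign boundary index `i` to the vertex `v` of `G`. -/
def assignBnd (G : BLG X) (v i : ℕ) : BLG X :=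
  ⟨G.verts, G.Adj, G.label, Function.update G.bnd v (some i)⟩

/-- Split the boundary vertex `u` of `G`: add a new vertex `w` with boundary index `i` and
the edge `{u,w}`, reattach the edges `{u,b}` with `ME b` to `w`, and move the labels `l` of
`u` with `ML l` to `w`. -/
def splitVx (G : BLG X) (u w i : ℕ) (ME : ℕ → Prop) (ML : X → Prop) : BLG X :=
  ⟨insert w G.verts,
   fun a b =>
     (a = w ∧ b = u) ∨ (a = u ∧ b = w) ∨
     (a = w ∧ b ≠ w ∧ G.Adj u b ∧ ME b) ∨ (b = w ∧ a ≠ w ∧ G.Adj u a ∧ ME a) ∨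
     (a ≠ w ∧ b ≠ w ∧ G.Adj a b ∧ ¬(a = u ∧ ME b) ∧ ¬(b = u ∧ ME a)),
   fun x => if x = w then {l | l ∈ G.label u ∧ ML l}
            else if x = u then {l | l ∈ G.label u ∧ ¬ ML l}
            else G.label x,
   fun x => if x = w then some i else G.bnd x⟩

/-- One extension step turning a `t`-boundaried graph into a `(t+1)`-boundaried one (up to
isomorphism): keep the graph unchanged, assign index `t+1` to a non-boundary vertex, or
split a boundary vertex. -/
def ExtOne (t : ℕ) (H H' : BLG X) : Prop :=
  Iso H' H ∨
  (∃ v ∈ H.verts, H.bnd v = none ∧ Iso H' (assignBnd H v (t + 1))) ∨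
  (∃ u ∈ H.verts, ∃ i, H.bnd u = some i ∧ ∃ w, w ∉ H.verts ∧
    ∃ ME : ℕ → Prop, ∃ ML : X → Prop, Iso H' (splitVx H u w (t + 1) ME ML))

/-- `H' ∈ ext_{+k}(H)` for a `t`-boundaried graph `H`: `k` successive extension steps. -/
def ExtN (t : ℕ) : ℕ → BLG X → BLG X → Prop
  | 0, H, H' => Iso H' H
  | k + 1, H, H' => ∃ H'', ExtN t k H H'' ∧ ExtOne (t + k) H'' H'

/-- `ext_{+k}` of a set of `t`-boundaried graphs. -/
def extSet (t k : ℕ) (S : Set (BLG X)) : Set (BLG X) := {H' | ∃ H ∈ S, ExtN t k H H'}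

/-- `mpcs_{+t}(S)` for a set `S` of unboundaried graphs. -/
def mpcsPlus (t : ℕ) (S : Set (BLG X)) : Set (BLG X) := mpcsSet (extSet 0 t S)

/-- `forget(G,k)`: forget the boundary status of all boundary vertices with index `> k`. -/
def forget (G : BLG X) (k : ℕ) : BLG X :=
  ⟨G.verts, G.Adj, G.label, fun v => (G.bnd v).bind fun i => if i ≤ k then some i else none⟩

/-- Membership in a set of graphs, up to isomorphism. -/
def MemIso (H : BLG X) (S : Set (BLG X)) : Prop := ∃ H' ∈ S, Iso H H'

/-- `G1` and `G2` share no edge: no edge between boundary indices `i,j` occurs in both. -/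
def EdgeDisjoint (G1 G2 : BLG X) : Prop :=
  ¬ ∃ i j, (∃ u v, G1.Adj u v ∧ G1.bnd u = some i ∧ G1.bnd v = some j) ∧
           (∃ u v, G2.Adj u v ∧ G2.bnd u = some i ∧ G2.bnd v = some j)

/-- The merge `Π1 ⊙_F Π2`. -/
def Merge (F : Set (BLG X)) (t : ℕ) (P1 P2 : Set (BLG X)) : Set (BLG X) :=
  {G | G ∈ mpcsPlus t F ∧ ∀ G1 G2 : BLG X, G1.WF t → G2.WF t → EdgeDisjoint G1 G2 →
    Iso (glue G1 G2) G →
    (∃ H ∈ P1, Minor H G1) ∨ (∃ H ∈ P2, Minor H G2)}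

/-- `(P1, P2) ∈ split_F(P)`: both contain `P`; for every `G ∈ P` and every subset `Y` of its
pieces, the sum over `Y` was added to `P1` or the sum over the complement was added to `P2`;
and every member of `P1`/`P2` is accounted for by one of the two addition rules. -/
def SplitMem (F : Set (BLG X)) (t : ℕ) (P P1 P2 : Set (BLG X)) : Prop :=
  P ⊆ P1 ∧ P ⊆ P2 ∧
  (∀ G ∈ P, ∀ Y ⊆ pcs G, MemIso (unionOf Y) P1 ∨ MemIso (unionOf (pcs G \ Y)) P2) ∧
  (∀ H ∈ P1, H ∈ P ∨ (∃ G ∈ P, ∃ Y ⊆ pcs G, Iso H (unionOf Y)) ∨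
    (H ∈ mpcsPlus t F ∧ ∃ H', Minor H' H ∧ MemIso H' P1)) ∧
  (∀ H ∈ P2, H ∈ P ∨ (∃ G ∈ P, ∃ Y ⊆ pcs G, Iso H (unionOf Y)) ∨
    (H ∈ mpcsPlus t F ∧ ∃ H', Minor H' H ∧ MemIso H' P2))

/-- `folio*_{Q,t}(G)`: the boundaried labeled minors of `G` lying in `mpcs_{+t}(Q)`. -/
def folioStar (Q : Set (BLG X)) (t : ℕ) (G : BLG X) : Set (BLG X) :=
  {H | H ∈ mpcsPlus t Q ∧ Minor H G}

/-- The `(t+1)`-boundaried graphs in which boundary index `t+1` is assigned to a vertex. -/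
def defBnd (t : ℕ) : Set (BLG X) := {G | ∃ v ∈ G.verts, G.bnd v = some t}

/-!
Write `H ∈ folio*(Gα ⊕ Gβ1)` as a sum `U` of pieces `P` of some `Gq ∈ ext_{+t}(Q)` together with
a minor model `φ` in `Gα ⊕ Gβ1`. In `glue G1 G2` the vertex `2 * u` is the vertex `u` of `G1`,
and the odd vertices are the vertices of `G2` not identified with a vertex of `G1`; so parity
tells on which side of the sum a vertex lies.

A branch set contains at most one boundary vertex, hence the branch set of an interior vertex lies
on one side, and the `Gα`-part of every branch set is connected. Call a piece a β-piece if `φ`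
realizes its boundary indices, labels, edges and interior vertices inside `Gβ1`. The sum of the
β-pieces lies in `mpcs_{+t}(Q)` and, pulling `φ` back to `Gβ1`, is a minor of `Gβ1`; by hypothesis
it then has a model `ψ` in `Gβ2`. Keeping the `Gα`-part of each branch set of `φ` and replacing
its `Gβ1`-part by the image of `ψ` gives a model of `U` in `Gα ⊕ Gβ2`: the two parts can only
meet in the boundary vertex of the branch set, which both of them contain.
-/

lemma BLG.WF.adj_symm {t : ℕ} {G : BLG X} (hG : G.WF t) {u v : ℕ} (h : G.Adj u v) :
    G.Adj v u :=
  hG.2.1 u v h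

lemma BLG.WF.not_adj_self {t : ℕ} {G : BLG X} (hG : G.WF t) (v : ℕ) : ¬ G.Adj v v :=
  hG.2.2.1 v

lemma BLG.WF.bnd_inj {t : ℕ} {G : BLG X} (hG : G.WF t) {u v i : ℕ} (hu : G.bnd u = some i)
    (hv : G.bnd v = some i) : u = v :=
  hG.2.2.2.2.2.1 u v i hu hv

namespace ReachIn

variable {G G' : BLG X} {S S' : Set ℕ} {a b : ℕ}

lemma map (f : ℕ → ℕ)
    (hf : ∀ u v, G.Adj u v → u ∈ S → v ∈ S → G'.Adj (f u) (f v) ∧ f u ∈ S' ∧ f v ∈ S')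
    (h : ReachIn G S a b) : ReachIn G' S' (f a) (f b) :=
  Relation.ReflTransGen.lift f (fun u v huv => hf u v huv.1 huv.2.1 huv.2.2) _ _ h

lemma mono_set (hSS' : S ⊆ S') (h : ReachIn G S a b) : ReachIn G S' a b :=
  Relation.ReflTransGen.mono (fun _ _ huv => ⟨huv.1, hSS' huv.2.1, hSS' huv.2.2⟩) _ _ h

lemma symm (hsymm : ∀ u v, G.Adj u v → G.Adj v u) (h : ReachIn G S a b) : ReachIn G S b a :=
  Relation.reflTransGen_swap.1 <|
    Relation.ReflTransGen.mono (fun _ _ huv => ⟨hsymm _ _ huv.1, huv.2.2, huv.2.1⟩) _ _ h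

end ReachIn

section Glue

variable {G1 G2 : BLG X}

def Matched (G1 G2 : BLG X) (v : ℕ) : Prop :=
  ∃ u, u ∈ G1.verts ∧ ∃ i, G2.bnd v = some i ∧ G1.bnd u = some i

lemma Matched.exists_rmap_eq {v : ℕ} (h : Matched G1 G2 v) :
    ∃ u ∈ G1.verts, (∃ i, G2.bnd v = some i ∧ G1.bnd u = some i) ∧ rmap G1 G2 v = 2 * u := by
  have h' : ∃ u ∈ G1.verts, ∃ i, G2.bnd v = some i ∧ G1.bnd u = some i := h
  rw [rmap, dif_pos h']
  exact ⟨_, (Classical.choose_spec h').1, (Classical.choose_spec h').2, rfl⟩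

lemma Matched.bnd_ne_none {v : ℕ} (h : Matched G1 G2 v) : G2.bnd v ≠ none := by
  obtain ⟨-, -, i, hi, -⟩ := h
  simp [hi]

lemma rmap_of_not_matched {v : ℕ} (h : ¬ Matched G1 G2 v) : rmap G1 G2 v = 2 * v + 1 :=
  dif_neg h

lemma rmap_mod_two_eq_zero_iff {v : ℕ} : rmap G1 G2 v % 2 = 0 ↔ Matched G1 G2 v := by
  by_cases h : Matched G1 G2 v
  · obtain ⟨u, -, -, hu⟩ := h.exists_rmap_eq
    simp only [h, hu, iff_true]
    omega
  · simp only [rmap_of_not_matched h, h, iff_false]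
    omega

lemma rmap_injective {t : ℕ} (h2 : G2.WF t) : Function.Injective (rmap G1 G2) := by
  intro u v h
  by_cases hmu : Matched G1 G2 u <;> by_cases hmv : Matched G1 G2 v
  · obtain ⟨a, -, ⟨i, hui, hai⟩, hua⟩ := hmu.exists_rmap_eq
    obtain ⟨b, -, ⟨j, hvj, hbj⟩, hvb⟩ := hmv.exists_rmap_eq
    obtain rfl : a = b := by omega
    obtain rfl : i = j := Option.some_injective _ (hai.symm.trans hbj)
    exact h2.bnd_inj hui hvj
  · obtain ⟨a, -, -, hua⟩ := hmu.exists_rmap_eq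
    rw [hua, rmap_of_not_matched hmv] at h
    omega
  · obtain ⟨a, -, -, hva⟩ := hmv.exists_rmap_eq
    rw [hva, rmap_of_not_matched hmu] at h
    omega
  · rw [rmap_of_not_matched hmu, rmap_of_not_matched hmv] at h
    omega

lemma mem_glue_verts {a : ℕ} :
    a ∈ (glue G1 G2).verts ↔ (∃ u ∈ G1.verts, a = 2 * u) ∨ (∃ v ∈ G2.verts, a = rmap G1 G2 v) := by
  simp only [glue, Set.mem_union, Set.mem_image, eq_comm (a := a)]

lemma two_mul_mem_glue {u : ℕ} (h : u ∈ G1.verts) : 2 * u ∈ (glue G1 G2).verts :=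
  mem_glue_verts.2 (Or.inl ⟨u, h, rfl⟩)

lemma rmap_mem_glue {v : ℕ} (h : v ∈ G2.verts) : rmap G1 G2 v ∈ (glue G1 G2).verts :=
  mem_glue_verts.2 (Or.inr ⟨v, h, rfl⟩)

lemma mem_glue_of_even {a : ℕ} (ha : a ∈ (glue G1 G2).verts) (he : a % 2 = 0) :
    a / 2 ∈ G1.verts ∧ a = 2 * (a / 2) := by
  rcases mem_glue_verts.1 ha with ⟨u, hu, rfl⟩ | ⟨v, -, rfl⟩
  · exact ⟨by simpa using hu, by omega⟩
  · obtain ⟨u, hu, -, hvu⟩ := (rmap_mod_two_eq_zero_iff.1 he).exists_rmap_eq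
    rw [hvu]
    exact ⟨by simpa using hu, by omega⟩

lemma mem_glue_of_odd {a : ℕ} (ha : a ∈ (glue G1 G2).verts) (ho : a % 2 = 1) :
    a / 2 ∈ G2.verts ∧ rmap G1 G2 (a / 2) = a := by
  rcases mem_glue_verts.1 ha with ⟨u, -, rfl⟩ | ⟨v, hv, rfl⟩
  · omega
  · have hm : ¬ Matched G1 G2 v := fun hm => by
      rw [← rmap_mod_two_eq_zero_iff] at hm
      omega
    rw [rmap_of_not_matched hm, show (2 * v + 1) / 2 = v by omega]
    exact ⟨hv, rmap_of_not_matched hm⟩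

lemma glue_bnd_of_even {a : ℕ} (ha : a ∈ (glue G1 G2).verts) (he : a % 2 = 0) :
    (glue G1 G2).bnd a = G1.bnd (a / 2) :=
  (if_pos ha).trans (if_pos he)

lemma glue_bnd_of_odd {a : ℕ} (ha : a ∈ (glue G1 G2).verts) (ho : a % 2 = 1) :
    (glue G1 G2).bnd a = G2.bnd (a / 2) :=
  (if_pos ha).trans (if_neg (by omega))

lemma glue_bnd_of_notMem {a : ℕ} (ha : a ∉ (glue G1 G2).verts) : (glue G1 G2).bnd a = none :=
  if_neg ha

lemma glue_bnd_two_mul {u : ℕ} (hu : u ∈ G1.verts) : (glue G1 G2).bnd (2 * u) = G1.bnd u := by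
  rw [glue_bnd_of_even (two_mul_mem_glue hu) (by omega), Nat.mul_div_cancel_left u two_pos]

lemma glue_bnd_rmap {v : ℕ} (hv : v ∈ G2.verts) : (glue G1 G2).bnd (rmap G1 G2 v) = G2.bnd v := by
  by_cases hm : Matched G1 G2 v
  · obtain ⟨u, hu, ⟨i, hvi, hui⟩, hvu⟩ := hm.exists_rmap_eq
    rw [hvu, glue_bnd_two_mul hu, hui, hvi]
  · have hodd : rmap G1 G2 v % 2 = 1 := by rw [rmap_of_not_matched hm]; omega
    rw [glue_bnd_of_odd (rmap_mem_glue hv) hodd, rmap_of_not_matched hm,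
      show (2 * v + 1) / 2 = v by omega]

lemma glue_bnd_ne_none_of_even {v : ℕ} (hv : v ∈ G2.verts) (he : rmap G1 G2 v % 2 = 0) :
    (glue G1 G2).bnd (rmap G1 G2 v) ≠ none := by
  rw [glue_bnd_rmap hv]
  exact (rmap_mod_two_eq_zero_iff.1 he).bnd_ne_none

lemma glue_bnd_inj {t : ℕ} (h1 : G1.WF t) (h2 : G2.WF t) {a b i : ℕ}
    (ha : (glue G1 G2).bnd a = some i) (hb : (glue G1 G2).bnd b = some i) : a = b := by
  have hmem : ∀ {x}, (glue G1 G2).bnd x = some i → x ∈ (glue G1 G2).verts := fun {x} hx => by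
    by_contra hx'
    simp [glue_bnd_of_notMem hx'] at hx
  have hva := hmem ha
  have hvb := hmem hb
  rcases Nat.mod_two_eq_zero_or_one a with hae | hao <;>
    rcases Nat.mod_two_eq_zero_or_one b with hbe | hbo
  · rw [glue_bnd_of_even hva hae] at ha
    rw [glue_bnd_of_even hvb hbe] at hb
    have := h1.bnd_inj ha hb
    have := (mem_glue_of_even hva hae).2
    have := (mem_glue_of_even hvb hbe).2
    omega
  · rw [glue_bnd_of_even hva hae] at ha
    rw [glue_bnd_of_odd hvb hbo] at hb
    obtain ⟨-, hbr⟩ := mem_glue_of_odd hvb hbo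
    have := rmap_mod_two_eq_zero_iff.2 ⟨a / 2, (mem_glue_of_even hva hae).1, i, hb, ha⟩
    omega
  · rw [glue_bnd_of_odd hva hao] at ha
    rw [glue_bnd_of_even hvb hbe] at hb
    obtain ⟨-, har⟩ := mem_glue_of_odd hva hao
    have := rmap_mod_two_eq_zero_iff.2 ⟨b / 2, (mem_glue_of_even hvb hbe).1, i, ha, hb⟩
    omega
  · rw [glue_bnd_of_odd hva hao] at ha
    rw [glue_bnd_of_odd hvb hbo] at hb
    have := h2.bnd_inj ha hb
    omega

lemma glue_adj_two_mul {u v : ℕ} (hu : u ∈ G1.verts) (hv : v ∈ G1.verts) (h : G1.Adj u v) :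
    (glue G1 G2).Adj (2 * u) (2 * v) :=
  Or.inl ⟨u, hu, v, hv, h, rfl, rfl⟩

lemma glue_adj_rmap {u v : ℕ} (hu : u ∈ G2.verts) (hv : v ∈ G2.verts) (h : G2.Adj u v) :
    (glue G1 G2).Adj (rmap G1 G2 u) (rmap G1 G2 v) :=
  Or.inr ⟨u, hu, v, hv, h, rfl, rfl⟩

lemma glue_adj_symm {t : ℕ} (h1 : G1.WF t) (h2 : G2.WF t) {a b : ℕ}
    (h : (glue G1 G2).Adj a b) : (glue G1 G2).Adj b a := by
  rcases h with ⟨u, hu, v, hv, huv, rfl, rfl⟩ | ⟨u, hu, v, hv, huv, rfl, rfl⟩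
  · exact glue_adj_two_mul hv hu (h1.adj_symm huv)
  · exact glue_adj_rmap hv hu (h2.adj_symm huv)

lemma glue_adj_of_odd {a b : ℕ} (h : (glue G1 G2).Adj a b) (hab : a % 2 = 1 ∨ b % 2 = 1) :
    ∃ u ∈ G2.verts, ∃ v ∈ G2.verts, G2.Adj u v ∧ a = rmap G1 G2 u ∧ b = rmap G1 G2 v := by
  rcases h with ⟨u, -, v, -, -, rfl, rfl⟩ | h
  · omega
  · exact h

lemma mem_glue_label_of_odd {a : ℕ} {l : X} (hl : l ∈ (glue G1 G2).label a) (ha : a % 2 = 1) :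
    ∃ w ∈ G2.verts, a = rmap G1 G2 w ∧ l ∈ G2.label w := by
  rcases hl with ⟨w, -, rfl, -⟩ | h
  · omega
  · exact h

lemma rmap_mod_two_eq_one {w : ℕ} (hw : w ∈ G2.verts)
    (h : (glue G1 G2).bnd (rmap G1 G2 w) = none) : rmap G1 G2 w % 2 = 1 := by
  by_contra he
  exact glue_bnd_ne_none_of_even hw (by omega) h

lemma rmap_eq_of_bnd {t : ℕ} (h1 : G1.WF t) {u w i : ℕ} (hu : u ∈ G1.verts)
    (hui : G1.bnd u = some i) (hwi : G2.bnd w = some i) : rmap G1 G2 w = 2 * u := by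
  obtain ⟨u', -, ⟨j, hwj, hu'j⟩, hwu'⟩ := Matched.exists_rmap_eq ⟨u, hu, i, hwi, hui⟩
  obtain rfl : j = i := Option.some_injective _ (hwj.symm.trans hwi)
  rw [hwu', h1.bnd_inj hu'j hui]

lemma glue_congr_of_even {G2' : BLG X} {a : ℕ} (ha : a ∈ (glue G1 G2).verts) (he : a % 2 = 0) :
    a ∈ (glue G1 G2').verts ∧ (glue G1 G2').bnd a = (glue G1 G2).bnd a := by
  obtain ⟨ha2, ha2'⟩ := mem_glue_of_even ha he
  have ha' : a ∈ (glue G1 G2').verts := ha2' ▸ two_mul_mem_glue ha2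
  exact ⟨ha', by rw [glue_bnd_of_even ha' he, glue_bnd_of_even ha he]⟩

end Glue

section GlueParity

variable {G1 G2 : BLG X}

lemma glue_adj_even_odd {a b : ℕ} (h : (glue G1 G2).Adj a b) (ha : a % 2 = 0) (hb : b % 2 = 1) :
    (glue G1 G2).bnd a ≠ none := by
  rcases h with ⟨u, -, v, -, -, rfl, rfl⟩ | ⟨u, hu, v, -, -, rfl, rfl⟩
  · omega
  · exact glue_bnd_ne_none_of_even hu ha

lemma glue_adj_odd_even {a b : ℕ} (h : (glue G1 G2).Adj a b) (ha : a % 2 = 1) (hb : b % 2 = 0) :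
    (glue G1 G2).bnd b ≠ none := by
  rcases h with ⟨u, -, v, -, -, rfl, rfl⟩ | ⟨u, -, v, hv, -, rfl, rfl⟩
  · omega
  · exact glue_bnd_ne_none_of_even hv hb

lemma glue_adj_mod_two_eq {a b : ℕ} (h : (glue G1 G2).Adj a b)
    (ha : (glue G1 G2).bnd a = none) (hb : (glue G1 G2).bnd b = none) : a % 2 = b % 2 := by
  rcases Nat.mod_two_eq_zero_or_one a with hae | hao <;>
    rcases Nat.mod_two_eq_zero_or_one b with hbe | hbo
  · omega
  · exact absurd ha (glue_adj_even_odd h hae hbo)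
  · exact absurd hb (glue_adj_odd_even h hao hbe)
  · omega

/-- Unless both ends are boundary vertices, an edge between even vertices comes from `G1`. -/
lemma glue_adj_of_even {G2' : BLG X} {a b : ℕ} (h : (glue G1 G2).Adj a b) (ha : a % 2 = 0)
    (hb : b % 2 = 0) (hab : (glue G1 G2).bnd a = none ∨ (glue G1 G2).bnd b = none) :
    (glue G1 G2').Adj a b := by
  rcases h with ⟨u, hu, v, hv, huv, rfl, rfl⟩ | ⟨u, hu, v, hv, -, rfl, rfl⟩
  · exact glue_adj_two_mul hu hv huv
  · rcases hab with hab | hab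
    · exact absurd hab (glue_bnd_ne_none_of_even hu ha)
    · exact absurd hab (glue_bnd_ne_none_of_even hv hb)

lemma glue_not_adj_self {t : ℕ} (h1 : G1.WF t) (h2 : G2.WF t) (a : ℕ) :
    ¬ (glue G1 G2).Adj a a := by
  rintro (⟨u, -, v, -, huv, rfl, hv⟩ | ⟨u, -, v, -, huv, rfl, hv⟩)
  · obtain rfl : u = v := by omega
    exact h1.not_adj_self u huv
  · obtain rfl := rmap_injective h2 hv
    exact h2.not_adj_self u huv

lemma ReachIn.glue_mod_two_eq {S : Set ℕ} (hS : ∀ x ∈ S, (glue G1 G2).bnd x = none) {a b : ℕ}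
    (h : ReachIn (glue G1 G2) S a b) : a % 2 = b % 2 := by
  induction h with
  | refl => rfl
  | tail _ hxy ih => exact ih.trans (glue_adj_mod_two_eq hxy.1 (hS _ hxy.2.1) (hS _ hxy.2.2))

lemma ReachIn.exists_even_bnd {S : Set ℕ} {a b : ℕ} (h : ReachIn (glue G1 G2) S a b)
    (ha : a % 2 = 0) (hb : b % 2 = 1) : ∃ x ∈ S, x % 2 = 0 ∧ (glue G1 G2).bnd x ≠ none := by
  induction h with
  | refl => omega
  | @tail x _ _ hxy ih =>
    rcases Nat.mod_two_eq_zero_or_one x with hx | hx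
    · exact ⟨x, hxy.2.1, hx, glue_adj_even_odd hxy.1 hx hb⟩
    · exact ih hx

/-- In a set with at most one boundary vertex, a walk between even vertices can drop its
excursions into the odd part, since each of them leaves and re-enters through that vertex. -/
lemma ReachIn.glue_even {t : ℕ} (h1 : G1.WF t) (h2 : G2.WF t) {G2' : BLG X} {S : Set ℕ}
    (hS : {x | x ∈ S ∧ (glue G1 G2).bnd x ≠ none}.Subsingleton) {a b : ℕ}
    (h : ReachIn (glue G1 G2) S a b) (haS : a ∈ S) (ha : a % 2 = 0) (hb : b % 2 = 0) :
    ReachIn (glue G1 G2') {x | x ∈ S ∧ x % 2 = 0} a b := by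
  suffices ∃ b₀ ∈ S, b₀ % 2 = 0 ∧ ReachIn (glue G1 G2') {x | x ∈ S ∧ x % 2 = 0} a b₀ ∧
      (b = b₀ ∨ (b % 2 = 1 ∧ (glue G1 G2).bnd b₀ ≠ none)) by
    obtain ⟨b₀, -, -, hre, rfl | ⟨hbo, -⟩⟩ := this
    · exact hre
    · omega
  clear hb
  induction h with
  | refl => exact ⟨a, haS, ha, .refl, Or.inl rfl⟩
  | @tail x y _ hxy ih =>
    obtain ⟨x₀, hx₀S, hx₀, hre, hx⟩ := ih
    rcases hx with rfl | ⟨hxo, hx₀b⟩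
    · rcases Nat.mod_two_eq_zero_or_one y with hye | hyo
      · refine ⟨y, hxy.2.2, hye, hre.tail ⟨?_, ⟨hx₀S, hx₀⟩, ⟨hxy.2.2, hye⟩⟩, Or.inl rfl⟩
        refine glue_adj_of_even hxy.1 hx₀ hye ?_
        by_contra! hbb
        obtain rfl : x = y := hS ⟨hx₀S, hbb.1⟩ ⟨hxy.2.2, hbb.2⟩
        exact glue_not_adj_self h1 h2 _ hxy.1
      · exact ⟨x, hx₀S, hx₀, hre, Or.inr ⟨hyo, glue_adj_even_odd hxy.1 hx₀ hyo⟩⟩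
    · rcases Nat.mod_two_eq_zero_or_one y with hye | hyo
      · have hyb := glue_adj_odd_even hxy.1 hxo hye
        exact ⟨x₀, hx₀S, hx₀, hre, Or.inl (hS ⟨hxy.2.2, hyb⟩ ⟨hx₀S, hx₀b⟩)⟩
      · exact ⟨x₀, hx₀S, hx₀, hre, Or.inr ⟨hyo, hx₀b⟩⟩

/-- Up to a final excursion into `G1` through the boundary vertex of `S`, a walk in `S` that
starts at a vertex of `G2` is a walk of `G2`. -/
lemma ReachIn.exists_of_glue {t : ℕ} (h2 : G2.WF t) {S : Set ℕ}
    (hS : {x | x ∈ S ∧ (glue G1 G2).bnd x ≠ none}.Subsingleton) {a₀ b : ℕ}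
    (ha₀ : a₀ ∈ G2.verts) (haS : rmap G1 G2 a₀ ∈ S) (h : ReachIn (glue G1 G2) S (rmap G1 G2 a₀) b) :
    ∃ b₀ ∈ G2.verts, rmap G1 G2 b₀ ∈ S ∧ ReachIn G2 (G2.verts ∩ rmap G1 G2 ⁻¹' S) a₀ b₀ ∧
      (b = rmap G1 G2 b₀ ∨ (b % 2 = 0 ∧ rmap G1 G2 b₀ % 2 = 0)) := by
  induction h with
  | refl => exact ⟨a₀, ha₀, haS, .refl, Or.inl rfl⟩
  | tail _ hxy ih =>
    obtain ⟨x₀, hx₀, hx₀S, hre, hx⟩ := ih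
    rcases hxy.1 with ⟨u, -, v, -, -, rfl, rfl⟩ | ⟨u, hu, v, hv, huv, rfl, rfl⟩
    · exact ⟨x₀, hx₀, hx₀S, hre, Or.inr ⟨by omega, by rcases hx with hx | hx <;> omega⟩⟩
    · obtain rfl : u = x₀ := by
        refine rmap_injective (G1 := G1) h2 ?_
        rcases hx with hx | ⟨hxe, hx₀e⟩
        · exact hx
        · exact hS ⟨hxy.2.1, glue_bnd_ne_none_of_even hu hxe⟩
            ⟨hx₀S, glue_bnd_ne_none_of_even hx₀ hx₀e⟩
      exact ⟨v, hv, hxy.2.2, hre.tail ⟨huv, ⟨hu, hx₀S⟩, ⟨hv, hxy.2.2⟩⟩, Or.inl rfl⟩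

lemma ReachIn.of_glue {t : ℕ} (h2 : G2.WF t) {S : Set ℕ}
    (hS : {x | x ∈ S ∧ (glue G1 G2).bnd x ≠ none}.Subsingleton) {a₀ b₀ : ℕ}
    (ha₀ : a₀ ∈ G2.verts) (haS : rmap G1 G2 a₀ ∈ S) (hb₀ : b₀ ∈ G2.verts)
    (hbS : rmap G1 G2 b₀ ∈ S) (h : ReachIn (glue G1 G2) S (rmap G1 G2 a₀) (rmap G1 G2 b₀)) :
    ReachIn G2 (G2.verts ∩ rmap G1 G2 ⁻¹' S) a₀ b₀ := by
  obtain ⟨c₀, hc₀, hc₀S, hre, hbc | ⟨hbe, hce⟩⟩ := h.exists_of_glue h2 hS ha₀ haS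
  · rwa [rmap_injective h2 hbc]
  · rwa [rmap_injective h2 (hS ⟨hbS, glue_bnd_ne_none_of_even hb₀ hbe⟩
      ⟨hc₀S, glue_bnd_ne_none_of_even hc₀ hce⟩)]

lemma ReachIn.exists_rmap_eq_of_bnd {t : ℕ} (h2 : G2.WF t) {S : Set ℕ}
    (hS : {x | x ∈ S ∧ (glue G1 G2).bnd x ≠ none}.Subsingleton) {a₀ g i : ℕ}
    (ha₀ : a₀ ∈ G2.verts) (haS : rmap G1 G2 a₀ ∈ S) (hgS : g ∈ S)
    (hg : (glue G1 G2).bnd g = some i) (h : ReachIn (glue G1 G2) S (rmap G1 G2 a₀) g) :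
    ∃ w ∈ G2.verts, rmap G1 G2 w = g ∧ G2.bnd w = some i := by
  obtain ⟨c₀, hc₀, hc₀S, -, hgc⟩ := h.exists_of_glue h2 hS ha₀ haS
  have hgc : g = rmap G1 G2 c₀ := by
    rcases hgc with hgc | ⟨-, hce⟩
    · exact hgc
    · exact hS ⟨hgS, by simp [hg]⟩ ⟨hc₀S, glue_bnd_ne_none_of_even hc₀ hce⟩
  exact ⟨c₀, hc₀, hgc.symm, by rw [← glue_bnd_rmap (G1 := G1) hc₀, ← hgc, hg]⟩

end GlueParity

section Pieces

variable {G p : BLG X} {P P' : Set (BLG X)}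

lemma mem_unionOf_verts {x : ℕ} : x ∈ (unionOf P).verts ↔ ∃ p ∈ P, x ∈ p.verts := by
  simp [unionOf]

lemma unionOf_adj {a b : ℕ} : (unionOf P).Adj a b ↔ ∃ p ∈ P, p.Adj a b := Iff.rfl

lemma mem_unionOf_label {x : ℕ} {l : X} : l ∈ (unionOf P).label x ↔ ∃ p ∈ P, l ∈ p.label x := by
  simp [unionOf]

lemma unionOf_verts_mono (h : P ⊆ P') : (unionOf P).verts ⊆ (unionOf P').verts := fun _ hx => by
  obtain ⟨p, hp, hxp⟩ := mem_unionOf_verts.1 hx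
  exact mem_unionOf_verts.2 ⟨p, h hp, hxp⟩

lemma mem_singlePc_verts {v i x : ℕ} {L : Set X} : x ∈ (singlePc v i L).verts ↔ x = v :=
  Iff.rfl

lemma singlePc_bnd {v i : ℕ} {L : Set X} (x : ℕ) :
    (singlePc v i L).bnd x = if x = v then some i else none := rfl

lemma mem_singlePc_label {v i x : ℕ} {L : Set X} {l : X} :
    l ∈ (singlePc v i L).label x ↔ x = v ∧ l ∈ L := by
  by_cases h : x = v <;> simp [singlePc, h]

lemma singlePc_not_adj {v i a b : ℕ} {L : Set X} : ¬ (singlePc v i L).Adj a b := id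

lemma mem_edgePc_verts {u v i j x : ℕ} : x ∈ (edgePc u v i j : BLG X).verts ↔ x = u ∨ x = v :=
  Iff.rfl

lemma edgePc_bnd {u v i j : ℕ} (x : ℕ) :
    (edgePc u v i j : BLG X).bnd x = if x = u then some i else if x = v then some j else none :=
  rfl

lemma edgePc_adj {u v i j a b : ℕ} :
    (edgePc u v i j : BLG X).Adj a b ↔ (a = u ∧ b = v) ∨ (a = v ∧ b = u) := Iff.rfl

lemma notMem_edgePc_label {u v i j x : ℕ} {l : X} : l ∉ (edgePc u v i j : BLG X).label x := id

lemma mem_compPc_verts {C : Set ℕ} {x : ℕ} :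
    x ∈ (compPc G C).verts ↔ x ∈ C ∨ (x ∈ G.verts ∧ G.bnd x ≠ none ∧ ∃ c ∈ C, G.Adj x c) :=
  Iff.rfl

lemma compPc_bnd_of_mem {C : Set ℕ} {x : ℕ} (hx : x ∈ (compPc G C).verts) :
    (compPc G C).bnd x = G.bnd x :=
  if_pos hx

lemma compPc_adj {C : Set ℕ} {a b : ℕ} :
    (compPc G C).Adj a b ↔
      G.Adj a b ∧ a ∈ (compPc G C).verts ∧ b ∈ (compPc G C).verts ∧
        ¬(G.bnd a ≠ none ∧ G.bnd b ≠ none) := Iff.rfl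

lemma mem_compPc_label {C : Set ℕ} {x : ℕ} {l : X} :
    l ∈ (compPc G C).label x ↔ x ∈ C ∧ l ∈ G.label x := by
  by_cases h : x ∈ C <;> simp [compPc, h]

lemma mem_of_mem_compPc_verts {C : Set ℕ} {x : ℕ} (hx : x ∈ (compPc G C).verts)
    (hxb : G.bnd x = none) : x ∈ C := by
  rcases mem_compPc_verts.1 hx with h | ⟨-, h, -⟩
  · exact h
  · exact absurd hxb h

lemma compPc_adj_mem {C : Set ℕ} {a b : ℕ} (h : (compPc G C).Adj a b) : a ∈ C ∨ b ∈ C := by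
  obtain ⟨-, ha, hb, hab⟩ := compPc_adj.1 h
  by_cases hba : G.bnd a = none
  · exact Or.inl (mem_of_mem_compPc_verts ha hba)
  · exact Or.inr (mem_of_mem_compPc_verts hb (by by_contra hbb; exact hab ⟨hba, hbb⟩))

lemma IsCompOf.subset_interior {C : Set ℕ} (hC : IsCompOf G (interior G) C) :
    C ⊆ interior G := by
  obtain ⟨v, -, rfl⟩ := hC
  exact fun _ hx => hx.1

lemma exists_adj_of_mem_compPc {C : Set ℕ} (hC : IsCompOf G (interior G) C) {x : ℕ}
    (hx : x ∈ (compPc G C).verts) (hxb : G.bnd x ≠ none) : ∃ y ∈ C, (compPc G C).Adj x y := by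
  rcases mem_compPc_verts.1 hx with h | ⟨-, -, y, hy, hxy⟩
  · exact absurd (hC.subset_interior h).2 hxb
  · exact ⟨y, hy, compPc_adj.2 ⟨hxy, hx, Or.inl hy, fun h => h.2 (hC.subset_interior hy).2⟩⟩

lemma mem_pcs :
    p ∈ pcs G ↔
      (∃ v ∈ G.verts, ∃ i, G.bnd v = some i ∧ p = singlePc v i (∅ : Set X)) ∨
      (∃ v ∈ G.verts, ∃ i, G.bnd v = some i ∧ ∃ l ∈ G.label v, p = singlePc v i {l}) ∨
      (∃ u v i j, G.Adj u v ∧ G.bnd u = some i ∧ G.bnd v = some j ∧ p = edgePc u v i j) ∨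
      (∃ C, IsCompOf G (interior G) C ∧ p = compPc G C) := by
  simp only [pcs, Set.mem_union, or_assoc]
  rfl

lemma mem_verts_of_mem_pcs (hp : p ∈ pcs G) {x : ℕ} (hx : p.bnd x ≠ none) : x ∈ p.verts := by
  rcases mem_pcs.1 hp with ⟨v, -, i, -, rfl⟩ | ⟨v, -, i, -, l, -, rfl⟩ |
    ⟨u, v, i, j, -, -, -, rfl⟩ | ⟨C, -, rfl⟩
  · by_contra h; exact hx (if_neg h)
  · by_contra h; exact hx (if_neg h)
  · simp only [edgePc_bnd] at hx
    split_ifs at hx with h1 h2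
    exacts [Or.inl h1, Or.inr h2, absurd rfl hx]
  · by_contra h; exact hx (if_neg h)

lemma mem_verts_of_adj_of_mem_pcs (hp : p ∈ pcs G) {a b : ℕ} (h : p.Adj a b) :
    a ∈ p.verts ∧ b ∈ p.verts := by
  rcases mem_pcs.1 hp with ⟨v, -, i, -, rfl⟩ | ⟨v, -, i, -, l, -, rfl⟩ |
    ⟨u, v, i, j, -, -, -, rfl⟩ | ⟨C, -, rfl⟩
  · exact absurd h singlePc_not_adj
  · exact absurd h singlePc_not_adj
  · rcases edgePc_adj.1 h with ⟨rfl, rfl⟩ | ⟨rfl, rfl⟩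
    · exact ⟨Or.inl rfl, Or.inr rfl⟩
    · exact ⟨Or.inr rfl, Or.inl rfl⟩
  · exact ⟨(compPc_adj.1 h).2.1, (compPc_adj.1 h).2.2.1⟩

lemma mem_verts_of_mem_label_of_mem_pcs (hp : p ∈ pcs G) {x : ℕ} {l : X}
    (hl : l ∈ p.label x) : x ∈ p.verts := by
  rcases mem_pcs.1 hp with ⟨v, -, i, -, rfl⟩ | ⟨v, -, i, -, l', -, rfl⟩ |
    ⟨u, v, i, j, -, -, -, rfl⟩ | ⟨C, -, rfl⟩
  · exact (mem_singlePc_label.1 hl).1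
  · exact (mem_singlePc_label.1 hl).1
  · exact absurd hl notMem_edgePc_label
  · exact Or.inl (mem_compPc_label.1 hl).1

lemma bnd_eq_of_mem_pcs (hp : p ∈ pcs G) {x : ℕ} (hx : x ∈ p.verts) : p.bnd x = G.bnd x := by
  rcases mem_pcs.1 hp with ⟨v, -, i, hvi, rfl⟩ | ⟨v, -, i, hvi, l, -, rfl⟩ |
    ⟨u, v, i, j, -, hui, hvj, rfl⟩ | ⟨C, -, rfl⟩
  · rw [mem_singlePc_verts.1 hx, singlePc_bnd, if_pos rfl, hvi]
  · rw [mem_singlePc_verts.1 hx, singlePc_bnd, if_pos rfl, hvi]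
  · rcases mem_edgePc_verts.1 hx with rfl | rfl
    · rw [edgePc_bnd, if_pos rfl, hui]
    · by_cases h : x = u
      · subst h; rw [edgePc_bnd, if_pos rfl, hui]
      · rw [edgePc_bnd, if_neg h, if_pos rfl, hvj]
  · exact compPc_bnd_of_mem hx

lemma unionOf_bnd (hP : P ⊆ pcs G) {x : ℕ} (hx : x ∈ (unionOf P).verts) :
    (unionOf P).bnd x = G.bnd x := by
  obtain ⟨p, hp, hxp⟩ := mem_unionOf_verts.1 hx
  by_cases h : ∃ q, q ∈ P ∧ q.bnd x ≠ none
  · refine (dif_pos h).trans ?_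
    obtain ⟨hq, hqx⟩ := Classical.choose_spec h
    exact bnd_eq_of_mem_pcs (hP hq) (mem_verts_of_mem_pcs (hP hq) hqx)
  · push Not at h
    rw [← bnd_eq_of_mem_pcs (hP hp) hxp, h p hp]
    exact dif_neg (by simpa using h)

lemma exists_comp_of_mem_unionOf (hP : P ⊆ pcs G) {x : ℕ} (hx : x ∈ (unionOf P).verts)
    (hbx : G.bnd x = none) : ∃ C, IsCompOf G (interior G) C ∧ compPc G C ∈ P ∧ x ∈ C := by
  obtain ⟨p, hp, hxp⟩ := mem_unionOf_verts.1 hx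
  rcases mem_pcs.1 (hP hp) with ⟨v, -, i, hvi, rfl⟩ | ⟨v, -, i, hvi, l, -, rfl⟩ |
    ⟨u, v, i, j, -, hui, hvj, rfl⟩ | ⟨C, hC, rfl⟩
  · simp [mem_singlePc_verts.1 hxp, hvi] at hbx
  · simp [mem_singlePc_verts.1 hxp, hvi] at hbx
  · rcases mem_edgePc_verts.1 hxp with rfl | rfl <;> simp_all
  · exact ⟨C, hC, hp, mem_of_mem_compPc_verts hxp hbx⟩

end Pieces

section IsoMinor

variable {G H U : BLG X}

lemma Iso.refl (G : BLG X) : Iso G G :=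
  ⟨id, Set.bijOn_id _, fun _ _ _ _ => Iff.rfl, fun _ _ => rfl, fun _ _ => rfl⟩

lemma Iso.symm (h : Iso H U) : Iso U H := by
  obtain ⟨f, hf, hadj, hlab, hbnd⟩ := h
  set g := Function.invFunOn f H.verts
  have hinv : Set.InvOn g f H.verts U.verts := hf.invOn_invFunOn
  have hg : Set.MapsTo g U.verts H.verts := hf.surjOn.mapsTo_invFunOn
  refine ⟨g, hf.symm hinv.symm, fun u hu v hv => ?_, fun v hv => ?_, fun v hv => ?_⟩
  · rw [hadj _ (hg hu) _ (hg hv), hinv.2 hu, hinv.2 hv]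
  · rw [← hlab _ (hg hv), hinv.2 hv]
  · rw [← hbnd _ (hg hv), hinv.2 hv]

lemma Minor.of_iso (hiso : Iso H U) (h : Minor U G) : Minor H G := by
  obtain ⟨f, hf, hadj, hlab, hbnd⟩ := hiso
  obtain ⟨φ, hφ⟩ := h
  refine ⟨φ ∘ f, ⟨fun v hv => hφ.sub _ (hf.mapsTo hv), fun v hv => hφ.nonempty _ (hf.mapsTo hv),
    fun v hv => hφ.conn _ (hf.mapsTo hv), fun u hu v hv huv => ?_, fun u hu v hv huv => ?_,
    fun v hv hb => ?_, fun v hv i hb => ?_, fun v hv l hl => ?_⟩⟩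
  · exact hφ.disj _ (hf.mapsTo hu) _ (hf.mapsTo hv) (hf.injOn.ne hu hv huv)
  · exact hφ.edge _ (hf.mapsTo hu) _ (hf.mapsTo hv) ((hadj u hu v hv).1 huv)
  · exact hφ.bnd_none _ (hf.mapsTo hv) ((hbnd v hv).trans hb)
  · exact hφ.bnd_some _ (hf.mapsTo hv) i ((hbnd v hv).trans hb)
  · exact hφ.labels _ (hf.mapsTo hv) l ((hlab v hv).symm ▸ hl)

lemma mem_mpcsPlus {t : ℕ} {Q : Set (BLG X)} :
    H ∈ mpcsPlus t Q ↔ ∃ Gq ∈ extSet 0 t Q, ∃ P ⊆ pcs Gq, P.Nonempty ∧ Iso H (unionOf P) := by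
  simp [mpcsPlus, mpcsSet, mpcs]

end IsoMinor

namespace MinorModel

variable {H G : BLG X} {φ : ℕ → Set ℕ} {u v a : ℕ}

lemma bnd_cases (hφ : MinorModel H G φ) (hv : v ∈ H.verts) (ha : a ∈ φ v) :
    G.bnd a = none ∨ G.bnd a = H.bnd v := by
  cases hbv : H.bnd v with
  | none => exact Or.inl (hφ.bnd_none v hv hbv a ha)
  | some i => exact (hφ.bnd_some v hv i hbv).1 a ha

lemma bnd_eq_some (hφ : MinorModel H G φ) (hv : v ∈ H.verts) (ha : a ∈ φ v) {i : ℕ}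
    (hai : G.bnd a = some i) : H.bnd v = some i := by
  rcases hφ.bnd_cases hv ha with h | h
  · simp [h] at hai
  · exact h ▸ hai

lemma bnd_subsingleton (hφ : MinorModel H G φ)
    (hG : ∀ {a b i : ℕ}, G.bnd a = some i → G.bnd b = some i → a = b) (hv : v ∈ H.verts) :
    {x | x ∈ φ v ∧ G.bnd x ≠ none}.Subsingleton := by
  rintro x ⟨hx, hxb⟩ y ⟨hy, hyb⟩
  obtain ⟨i, hi⟩ := Option.ne_none_iff_exists'.1 hxb
  obtain ⟨j, hj⟩ := Option.ne_none_iff_exists'.1 hyb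
  obtain rfl : i = j :=
    Option.some_injective _ ((hφ.bnd_eq_some hv hx hi).symm.trans (hφ.bnd_eq_some hv hy hj))
  exact hG hi hj

lemma mem_of_bnd (hφ : MinorModel H G φ)
    (hG : ∀ {a b i : ℕ}, G.bnd a = some i → G.bnd b = some i → a = b) (hv : v ∈ H.verts)
    {i : ℕ} (hvi : H.bnd v = some i) (hai : G.bnd a = some i) : a ∈ φ v := by
  obtain ⟨g, hg, hgi⟩ := (hφ.bnd_some v hv i hvi).2
  rwa [hG hai hgi]

lemma eq_of_bnd_eq (hφ : MinorModel H G φ)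
    (hG : ∀ {a b i : ℕ}, G.bnd a = some i → G.bnd b = some i → a = b) (hu : u ∈ H.verts)
    (hv : v ∈ H.verts) {i : ℕ} (hui : H.bnd u = some i) (hvi : H.bnd v = some i) : u = v := by
  by_contra huv
  obtain ⟨g, hg, hgi⟩ := (hφ.bnd_some u hu i hui).2
  exact Set.disjoint_left.1 (hφ.disj u hu v hv huv) hg (hφ.mem_of_bnd hG hv hvi hgi)

lemma reachIn_glue_rmap {Ga : BLG X} (hφ : MinorModel H G φ) (hv : v ∈ H.verts) {w w' : ℕ}
    (hw : w ∈ φ v) (hw' : w' ∈ φ v) :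
    ReachIn (glue Ga G) (rmap Ga G '' φ v) (rmap Ga G w) (rmap Ga G w') :=
  (hφ.conn v hv w hw w' hw').map _ fun p q hpq hp hq =>
    ⟨glue_adj_rmap (hφ.sub v hv hp) (hφ.sub v hv hq) hpq, ⟨p, hp, rfl⟩, ⟨q, hq, rfl⟩⟩

end MinorModel

lemma minorModel_unionOf_empty (G : BLG X) :
    MinorModel (unionOf (∅ : Set (BLG X))) G (fun _ => ∅) := by
  constructor <;> simp [unionOf]

structure PieceModel (t : ℕ) (Ga Gb Gq : BLG X) (P : Set (BLG X)) (φ : ℕ → Set ℕ) : Prop where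
  wf_left : Ga.WF t
  wf_right : Gb.WF t
  subset_pcs : P ⊆ pcs Gq
  model : MinorModel (unionOf P) (glue Ga Gb) φ

def betaBranch (Ga Gb : BLG X) (φ : ℕ → Set ℕ) (v : ℕ) : Set ℕ := Gb.verts ∩ rmap Ga Gb ⁻¹' φ v

/-- The pieces that `φ` realizes entirely on the `Gb`-side of `glue Ga Gb`. -/
structure BetaPiece (Ga Gb Gq : BLG X) (φ : ℕ → Set ℕ) (p : BLG X) : Prop where
  bnd : ∀ v i, p.bnd v = some i → ∃ w ∈ Gb.verts, Gb.bnd w = some i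
  label : ∀ v, ∀ l ∈ p.label v, ∃ w ∈ betaBranch Ga Gb φ v, l ∈ Gb.label w
  adj : ∀ u v, p.Adj u v → ∃ w ∈ betaBranch Ga Gb φ u, ∃ w' ∈ betaBranch Ga Gb φ v, Gb.Adj w w'
  interior_odd : ∀ v ∈ p.verts, Gq.bnd v = none → ∀ a ∈ φ v, a % 2 = 1

def betaPieces (Ga Gb Gq : BLG X) (φ : ℕ → Set ℕ) (P : Set (BLG X)) : Set (BLG X) :=
  {p | p ∈ P ∧ BetaPiece Ga Gb Gq φ p}

abbrev betaSum (Ga Gb Gq : BLG X) (φ : ℕ → Set ℕ) (P : Set (BLG X)) : BLG X :=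
  unionOf (betaPieces Ga Gb Gq φ P)

section BetaPieces

variable {t : ℕ} {Ga Gb Gq : BLG X} {P : Set (BLG X)} {φ : ℕ → Set ℕ}

lemma betaPieces_subset : betaPieces Ga Gb Gq φ P ⊆ P := fun _ hp => hp.1

lemma mem_of_mem_betaSum {v : ℕ} (hv : v ∈ (betaSum Ga Gb Gq φ P).verts) :
    v ∈ (unionOf P).verts :=
  unionOf_verts_mono betaPieces_subset hv

lemma betaPiece_singlePc {v i : ℕ} {L : Set X} (hvi : Gq.bnd v = some i)
    (hi : ∃ w ∈ Gb.verts, Gb.bnd w = some i)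
    (hL : ∀ l ∈ L, ∃ w ∈ betaBranch Ga Gb φ v, l ∈ Gb.label w) :
    BetaPiece Ga Gb Gq φ (singlePc v i L) where
  bnd x j hx := by
    rw [singlePc_bnd] at hx
    split_ifs at hx
    exact Option.some_injective _ hx ▸ hi
  label x l hl := by
    obtain ⟨rfl, hlL⟩ := mem_singlePc_label.1 hl
    exact hL l hlL
  adj _ _ h := absurd h singlePc_not_adj
  interior_odd x hx hxb := by
    rw [mem_singlePc_verts.1 hx, hvi] at hxb
    cases hxb

lemma betaPiece_edgePc (hGb : Gb.WF t) {u v i j : ℕ} (hui : Gq.bnd u = some i)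
    (hvj : Gq.bnd v = some j) (hi : ∃ w ∈ Gb.verts, Gb.bnd w = some i)
    (hj : ∃ w ∈ Gb.verts, Gb.bnd w = some j)
    (huv : ∃ w ∈ betaBranch Ga Gb φ u, ∃ w' ∈ betaBranch Ga Gb φ v, Gb.Adj w w') :
    BetaPiece Ga Gb Gq φ (edgePc u v i j) where
  bnd x k hx := by
    rw [edgePc_bnd] at hx
    split_ifs at hx
    · exact Option.some_injective _ hx ▸ hi
    · exact Option.some_injective _ hx ▸ hj
  label _ _ h := absurd h notMem_edgePc_label
  adj x y hxy := by
    rcases edgePc_adj.1 hxy with ⟨rfl, rfl⟩ | ⟨rfl, rfl⟩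
    · exact huv
    · obtain ⟨w, hw, w', hw', hww'⟩ := huv
      exact ⟨w', hw', w, hw, hGb.adj_symm hww'⟩
  interior_odd x hx hxb := by
    rcases mem_edgePc_verts.1 hx with rfl | rfl <;> simp_all

lemma odd_of_mem_betaSum {v : ℕ} (hv : v ∈ (betaSum Ga Gb Gq φ P).verts)
    (hvb : Gq.bnd v = none) {a : ℕ} (ha : a ∈ φ v) : a % 2 = 1 := by
  obtain ⟨p, hp, hvp⟩ := mem_unionOf_verts.1 hv
  exact hp.2.interior_odd v hvp hvb a ha

end BetaPieces

namespace PieceModel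

variable {t : ℕ} {Ga Gb Gq : BLG X} {P : Set (BLG X)} {φ : ℕ → Set ℕ} {u v : ℕ}

lemma bnd_eq (c : PieceModel t Ga Gb Gq P φ) (hv : v ∈ (unionOf P).verts) :
    (unionOf P).bnd v = Gq.bnd v :=
  unionOf_bnd c.subset_pcs hv

lemma bnd_subsingleton (c : PieceModel t Ga Gb Gq P φ) (hv : v ∈ (unionOf P).verts) :
    {x | x ∈ φ v ∧ (glue Ga Gb).bnd x ≠ none}.Subsingleton :=
  c.model.bnd_subsingleton (glue_bnd_inj c.wf_left c.wf_right) hv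

lemma glue_bnd_eq_none (c : PieceModel t Ga Gb Gq P φ) (hv : v ∈ (unionOf P).verts)
    (hvb : Gq.bnd v = none) {a : ℕ} (ha : a ∈ φ v) : (glue Ga Gb).bnd a = none :=
  c.model.bnd_none v hv ((c.bnd_eq hv).trans hvb) a ha

lemma mod_two_eq (c : PieceModel t Ga Gb Gq P φ) (hv : v ∈ (unionOf P).verts)
    (hvb : Gq.bnd v = none) {a b : ℕ} (ha : a ∈ φ v) (hb : b ∈ φ v) : a % 2 = b % 2 :=
  ReachIn.glue_mod_two_eq (fun _ hx => c.glue_bnd_eq_none hv hvb hx) (c.model.conn v hv a ha b hb)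

/-- Along a component of `Gq − δ(Gq)` the model uses no boundary vertex of `glue Ga Gb`, so all
its branch sets lie on the same side. -/
lemma mod_two_eq_of_mem_comp (c : PieceModel t Ga Gb Gq P φ) {C : Set ℕ}
    (hC : IsCompOf Gq (interior Gq) C) (hpC : compPc Gq C ∈ P) {u w a b : ℕ} (hu : u ∈ C)
    (hw : w ∈ C) (ha : a ∈ φ u) (hb : b ∈ φ w) : a % 2 = b % 2 := by
  have hCU : ∀ x ∈ C, x ∈ (unionOf P).verts := fun x hx => mem_unionOf_verts.2 ⟨_, hpC, Or.inl hx⟩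
  have hCb : ∀ x ∈ C, Gq.bnd x = none := fun x hx => (hC.subset_interior hx).2
  have hstep : ∀ x ∈ C, ∀ y ∈ C, Gq.Adj x y → ∀ a ∈ φ x, ∀ b ∈ φ y, a % 2 = b % 2 := by
    intro x hx y hy hxy a ha b hb
    have hUxy : (unionOf P).Adj x y := unionOf_adj.2
      ⟨_, hpC, compPc_adj.2 ⟨hxy, Or.inl hx, Or.inl hy, fun h => h.1 (hCb x hx)⟩⟩
    obtain ⟨a', ha', b', hb', hab'⟩ := c.model.edge x (hCU x hx) y (hCU y hy) hUxy
    have h1 := c.mod_two_eq (hCU x hx) (hCb x hx) ha ha'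
    have h2 := glue_adj_mod_two_eq hab' (c.glue_bnd_eq_none (hCU x hx) (hCb x hx) ha')
      (c.glue_bnd_eq_none (hCU y hy) (hCb y hy) hb')
    have h3 := c.mod_two_eq (hCU y hy) (hCb y hy) hb' hb
    omega
  obtain ⟨v₀, hv₀, rfl⟩ := hC
  obtain ⟨a₀, ha₀⟩ := c.model.nonempty v₀ (hCU v₀ ⟨hv₀, .refl⟩)
  have hreach : ∀ x, ReachIn Gq (interior Gq) v₀ x → x ∈ interior Gq →
      ∀ a ∈ φ x, a % 2 = a₀ % 2 := by
    intro x hx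
    induction hx with
    | refl => exact fun _ a ha => c.mod_two_eq (hCU v₀ ⟨hv₀, .refl⟩) hv₀.2 ha ha₀
    | @tail y x hy hyx ih =>
      intro hxi a ha
      obtain ⟨b, hb⟩ := c.model.nonempty y (hCU y ⟨hyx.2.1, hy⟩)
      rw [← ih hyx.2.1 b hb]
      exact (hstep y ⟨hyx.2.1, hy⟩ x ⟨hxi, hy.tail hyx⟩ hyx.1 b hb a ha).symm
  rw [hreach u hu.2 hu.1 a ha, hreach w hw.2 hw.1 b hb]

lemma exists_bnd_of_rmap_mem (c : PieceModel t Ga Gb Gq P φ) (hv : v ∈ (unionOf P).verts)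
    {i w : ℕ} (hvi : Gq.bnd v = some i) (hw : w ∈ betaBranch Ga Gb φ v) :
    ∃ w' ∈ Gb.verts, Gb.bnd w' = some i := by
  obtain ⟨g, hg, hgi⟩ := (c.model.bnd_some v hv i ((c.bnd_eq hv).trans hvi)).2
  obtain ⟨w', hw', -, hw'i⟩ := (c.model.conn v hv _ hw.2 g hg).exists_rmap_eq_of_bnd c.wf_right
    (c.bnd_subsingleton hv) hw.1 hw.2 hg hgi
  exact ⟨w', hw', hw'i⟩

lemma rmap_mem_of_bnd (c : PieceModel t Ga Gb Gq P φ) (hv : v ∈ (unionOf P).verts) {i w : ℕ}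
    (hvi : Gq.bnd v = some i) (hw : w ∈ Gb.verts) (hwi : Gb.bnd w = some i) :
    rmap Ga Gb w ∈ φ v :=
  c.model.mem_of_bnd (glue_bnd_inj c.wf_left c.wf_right) hv ((c.bnd_eq hv).trans hvi)
    ((glue_bnd_rmap hw).trans hwi)

lemma div_two_mem_betaBranch (c : PieceModel t Ga Gb Gq P φ) (hv : v ∈ (unionOf P).verts)
    {a : ℕ} (ha : a ∈ φ v) (hao : a % 2 = 1) : a / 2 ∈ betaBranch Ga Gb φ v := by
  obtain ⟨ha2, hra⟩ := mem_glue_of_odd (c.model.sub v hv ha) hao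
  exact ⟨ha2, by rwa [Set.mem_preimage, hra]⟩

lemma betaPiece_compPc (c : PieceModel t Ga Gb Gq P φ) {C : Set ℕ}
    (hC : IsCompOf Gq (interior Gq) C) (hpC : compPc Gq C ∈ P)
    (hodd : ∃ v ∈ C, ∃ a ∈ φ v, a % 2 = 1) : BetaPiece Ga Gb Gq φ (compPc Gq C) := by
  obtain ⟨v₀, hv₀, a₀, ha₀, ha₀o⟩ := hodd
  have hCodd : ∀ x ∈ C, ∀ a ∈ φ x, a % 2 = 1 := fun x hx a ha => by
    have := c.mod_two_eq_of_mem_comp hC hpC hv₀ hx ha₀ ha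
    omega
  have hU : ∀ x ∈ (compPc Gq C).verts, x ∈ (unionOf P).verts := fun x hx =>
    mem_unionOf_verts.2 ⟨_, hpC, hx⟩
  refine ⟨fun x k hx => ?_, fun x l hl => ?_, fun x y hxy => ?_, fun x hx hxb a ha => ?_⟩
  · have hxm : x ∈ (compPc Gq C).verts :=
      mem_verts_of_mem_pcs (c.subset_pcs hpC) (by simp [hx])
    have hxk : Gq.bnd x = some k := (compPc_bnd_of_mem hxm).symm.trans hx
    obtain ⟨y, hy, hxy⟩ := exists_adj_of_mem_compPc hC hxm (by simp [hxk])
    obtain ⟨a, ha, b, hb, hab⟩ :=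
      c.model.edge x (hU x hxm) y (hU y (Or.inl hy)) (unionOf_adj.2 ⟨_, hpC, hxy⟩)
    obtain ⟨w, hw, -, -, -, rfl, -⟩ := glue_adj_of_odd hab (Or.inr (hCodd y hy b hb))
    exact c.exists_bnd_of_rmap_mem (hU x hxm) hxk ⟨hw, ha⟩
  · obtain ⟨hx, -⟩ := mem_compPc_label.1 hl
    obtain ⟨a, ha, hla⟩ :=
      c.model.labels x (hU x (Or.inl hx)) l (mem_unionOf_label.2 ⟨_, hpC, hl⟩)
    obtain ⟨w, hw, rfl, hlw⟩ := mem_glue_label_of_odd hla (hCodd x hx a ha)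
    exact ⟨w, ⟨hw, ha⟩, hlw⟩
  · obtain ⟨-, hx, hy, -⟩ := compPc_adj.1 hxy
    obtain ⟨a, ha, b, hb, hab⟩ :=
      c.model.edge x (hU x hx) y (hU y hy) (unionOf_adj.2 ⟨_, hpC, hxy⟩)
    have hodd : a % 2 = 1 ∨ b % 2 = 1 := (compPc_adj_mem hxy).imp
      (fun hx => hCodd x hx a ha) (fun hy => hCodd y hy b hb)
    obtain ⟨w, hw, w', hw', hww', rfl, rfl⟩ := glue_adj_of_odd hab hodd
    exact ⟨w, ⟨hw, ha⟩, w', ⟨hw', hb⟩, hww'⟩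
  · exact hCodd x (mem_of_mem_compPc_verts hx hxb) a ha

lemma betaSum_bnd (c : PieceModel t Ga Gb Gq P φ) (hv : v ∈ (betaSum Ga Gb Gq φ P).verts) :
    (betaSum Ga Gb Gq φ P).bnd v = Gq.bnd v :=
  unionOf_bnd (betaPieces_subset.trans c.subset_pcs) hv

lemma exists_betaBranch_bnd (c : PieceModel t Ga Gb Gq P φ)
    (hv : v ∈ (betaSum Ga Gb Gq φ P).verts) {i : ℕ} (hvi : Gq.bnd v = some i) :
    ∃ w ∈ betaBranch Ga Gb φ v, Gb.bnd w = some i := by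
  obtain ⟨p, hp, hvp⟩ := mem_unionOf_verts.1 hv
  obtain ⟨w, hw, hwi⟩ :=
    hp.2.bnd v i ((bnd_eq_of_mem_pcs (c.subset_pcs hp.1) hvp).trans hvi)
  exact ⟨w, ⟨hw, c.rmap_mem_of_bnd (mem_of_mem_betaSum hv) hvi hw hwi⟩, hwi⟩

lemma betaModel (c : PieceModel t Ga Gb Gq P φ) :
    MinorModel (betaSum Ga Gb Gq φ P) Gb (betaBranch Ga Gb φ) := by
  have hU : ∀ {v}, v ∈ (betaSum Ga Gb Gq φ P).verts → v ∈ (unionOf P).verts :=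
    mem_of_mem_betaSum
  have hbnd : ∀ v ∈ (betaSum Ga Gb Gq φ P).verts,
      (betaSum Ga Gb Gq φ P).bnd v = (unionOf P).bnd v := fun v hv =>
    (c.betaSum_bnd hv).trans (c.bnd_eq (hU hv)).symm
  refine ⟨fun _ _ => Set.inter_subset_left, fun v hv => ?_, fun v hv a ha b hb => ?_,
    fun u hu v hv huv => ?_, fun u _ v _ huv => ?_, fun v hv hvb w hw => ?_,
    fun v hv i hvi => ⟨fun w hw => ?_, ?_⟩, fun v hv l hl => ?_⟩
  · cases hvb : Gq.bnd v with
    | some i => exact (c.exists_betaBranch_bnd hv hvb).imp fun _ h => h.1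
    | none =>
      obtain ⟨a, ha⟩ := c.model.nonempty v (hU hv)
      exact ⟨_, c.div_two_mem_betaBranch (hU hv) ha (odd_of_mem_betaSum hv hvb ha)⟩
  · exact (c.model.conn v (hU hv) _ ha.2 _ hb.2).of_glue c.wf_right (c.bnd_subsingleton (hU hv))
      ha.1 ha.2 hb.1 hb.2
  · exact Disjoint.mono Set.inter_subset_right Set.inter_subset_right
      ((c.model.disj u (hU hu) v (hU hv) huv).preimage _)
  · obtain ⟨p, hp, hpuv⟩ := unionOf_adj.1 huv
    exact hp.2.adj u v hpuv
  · rw [← glue_bnd_rmap (G1 := Ga) hw.1]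
    exact c.model.bnd_none v (hU hv) ((hbnd v hv).symm.trans hvb) _ hw.2
  · rw [← glue_bnd_rmap (G1 := Ga) hw.1]
    exact (c.model.bnd_some v (hU hv) i ((hbnd v hv).symm.trans hvi)).1 _ hw.2
  · exact c.exists_betaBranch_bnd hv ((c.betaSum_bnd hv).symm.trans hvi)
  · obtain ⟨p, hp, hlp⟩ := mem_unionOf_label.1 hl
    exact hp.2.label v l hlp

lemma rmap_mod_two_of_mem_betaBranch (c : PieceModel t Ga Gb Gq P φ)
    (hv : v ∈ (unionOf P).verts) (hvb : Gq.bnd v = none) {w : ℕ}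
    (hw : w ∈ betaBranch Ga Gb φ v) : rmap Ga Gb w % 2 = 1 :=
  rmap_mod_two_eq_one hw.1 (c.glue_bnd_eq_none hv hvb hw.2)

lemma even_of_mem_bnd (c : PieceModel t Ga Gb Gq P φ) (hv : v ∈ (unionOf P).verts) {g e : ℕ}
    (hg : g ∈ φ v) (hgb : (glue Ga Gb).bnd g ≠ none) (he : e ∈ φ v) (hee : e % 2 = 0) :
    g % 2 = 0 := by
  by_contra hgo
  obtain ⟨x, hx, hxe, hxb⟩ := (c.model.conn v hv e he g hg).exists_even_bnd hee (by omega)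
  obtain rfl : x = g := c.bnd_subsingleton hv ⟨hx, hxb⟩ ⟨hg, hgb⟩
  omega

lemma betaPiece_compPc_of_mem (c : PieceModel t Ga Gb Gq P φ) {C : Set ℕ}
    (hC : IsCompOf Gq (interior Gq) C) (hpC : compPc Gq C ∈ P) (hv : v ∈ C) {w : ℕ}
    (hw : w ∈ betaBranch Ga Gb φ v) : BetaPiece Ga Gb Gq φ (compPc Gq C) :=
  c.betaPiece_compPc hC hpC ⟨v, hv, _, hw.2,
    c.rmap_mod_two_of_mem_betaBranch (mem_unionOf_verts.2 ⟨_, hpC, Or.inl hv⟩)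
      (hC.subset_interior hv).2 hw⟩

lemma betaPiece_edgePc_of_mem (c : PieceModel t Ga Gb Gq P φ) {i j : ℕ}
    (hp : edgePc u v i j ∈ P) (hui : Gq.bnd u = some i) (hvj : Gq.bnd v = some j) {w w' : ℕ}
    (hw : w ∈ betaBranch Ga Gb φ u) (hw' : w' ∈ betaBranch Ga Gb φ v) (hww' : Gb.Adj w w') :
    BetaPiece Ga Gb Gq φ (edgePc u v i j) :=
  betaPiece_edgePc c.wf_right hui hvj
    (c.exists_bnd_of_rmap_mem (mem_unionOf_verts.2 ⟨_, hp, Or.inl rfl⟩) hui hw)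
    (c.exists_bnd_of_rmap_mem (mem_unionOf_verts.2 ⟨_, hp, Or.inr rfl⟩) hvj hw')
    ⟨w, hw, w', hw', hww'⟩

lemma exists_betaBranch_adj (c : PieceModel t Ga Gb Gq P φ) (hv : v ∈ (unionOf P).verts)
    (hodd : ∀ a ∈ φ v, a % 2 = 1) (hu : u ∈ (unionOf P).verts) (hvu : (unionOf P).Adj v u) :
    ∃ w ∈ betaBranch Ga Gb φ v, ∃ w' ∈ betaBranch Ga Gb φ u, Gb.Adj w w' := by
  obtain ⟨a, ha, b, hb, hab⟩ := c.model.edge v hv u hu hvu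
  obtain ⟨w, hw, w', hw', hww', rfl, rfl⟩ := glue_adj_of_odd hab (Or.inl (hodd a ha))
  exact ⟨w, ⟨hw, ha⟩, w', ⟨hw', hb⟩, hww'⟩

lemma mem_betaSum_of_bnd_of_odd (c : PieceModel t Ga Gb Gq P φ) (hv : v ∈ (unionOf P).verts)
    {i : ℕ} (hvi : Gq.bnd v = some i) (hodd : ∀ a ∈ φ v, a % 2 = 1) :
    v ∈ (betaSum Ga Gb Gq φ P).verts := by
  obtain ⟨p, hp, hvp⟩ := mem_unionOf_verts.1 hv
  suffices BetaPiece Ga Gb Gq φ p from mem_unionOf_verts.2 ⟨p, ⟨hp, this⟩, hvp⟩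
  rcases mem_pcs.1 (c.subset_pcs hp) with ⟨v', -, i', hv'i, rfl⟩ | ⟨v', -, i', hv'i, l, -, rfl⟩ |
    ⟨u', v', i', j', -, hu'i, hv'j, rfl⟩ | ⟨C, hC, rfl⟩
  · obtain rfl := mem_singlePc_verts.1 hvp
    obtain ⟨a, ha⟩ := c.model.nonempty v hv
    exact betaPiece_singlePc hv'i
      (c.exists_bnd_of_rmap_mem hv hv'i (c.div_two_mem_betaBranch hv ha (hodd a ha))) (by simp)
  · obtain rfl := mem_singlePc_verts.1 hvp
    have hl : l ∈ (unionOf P).label v :=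
      mem_unionOf_label.2 ⟨_, hp, mem_singlePc_label.2 ⟨rfl, rfl⟩⟩
    obtain ⟨a, ha, hla⟩ := c.model.labels v hv l hl
    obtain ⟨w, hw, rfl, hlw⟩ := mem_glue_label_of_odd hla (hodd _ ha)
    refine betaPiece_singlePc hv'i (c.exists_bnd_of_rmap_mem hv hv'i ⟨hw, ha⟩) ?_
    rintro _ rfl
    exact ⟨w, ⟨hw, ha⟩, hlw⟩
  · have hU : ∀ x ∈ (edgePc u' v' i' j' : BLG X).verts, x ∈ (unionOf P).verts := fun x hx =>
      mem_unionOf_verts.2 ⟨_, hp, hx⟩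
    rcases mem_edgePc_verts.1 hvp with rfl | rfl
    · obtain ⟨w, hw, w', hw', hww'⟩ := c.exists_betaBranch_adj hv hodd (hU v' (Or.inr rfl))
        (unionOf_adj.2 ⟨_, hp, Or.inl ⟨rfl, rfl⟩⟩)
      exact c.betaPiece_edgePc_of_mem hp hu'i hv'j hw hw' hww'
    · obtain ⟨w, hw, w', hw', hww'⟩ := c.exists_betaBranch_adj hv hodd (hU u' (Or.inl rfl))
        (unionOf_adj.2 ⟨_, hp, Or.inr ⟨rfl, rfl⟩⟩)
      exact c.betaPiece_edgePc_of_mem hp hu'i hv'j hw' hw (c.wf_right.adj_symm hww')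
  · obtain ⟨y, hy, hvy⟩ := exists_adj_of_mem_compPc hC hvp (by simp [hvi])
    obtain ⟨-, -, w', hw', -⟩ := c.exists_betaBranch_adj hv hodd
      (mem_unionOf_verts.2 ⟨_, hp, Or.inl hy⟩) (unionOf_adj.2 ⟨_, hp, hvy⟩)
    exact c.betaPiece_compPc_of_mem hC hp hy hw'

lemma mem_betaSum_of_odd (c : PieceModel t Ga Gb Gq P φ) (hv : v ∈ (unionOf P).verts)
    (hodd : ∀ a ∈ φ v, a % 2 = 1) : v ∈ (betaSum Ga Gb Gq φ P).verts := by
  cases hvb : Gq.bnd v with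
  | some i => exact c.mem_betaSum_of_bnd_of_odd hv hvb hodd
  | none =>
    obtain ⟨C, hC, hpC, hvC⟩ := exists_comp_of_mem_unionOf c.subset_pcs hv hvb
    obtain ⟨a, ha⟩ := c.model.nonempty v hv
    exact mem_unionOf_verts.2
      ⟨_, ⟨hpC, c.betaPiece_compPc hC hpC ⟨v, hvC, a, ha, hodd a ha⟩⟩, Or.inl hvC⟩

lemma mem_betaSum_label (c : PieceModel t Ga Gb Gq P φ) (hv : v ∈ (unionOf P).verts) {l : X}
    (hl : l ∈ (unionOf P).label v) {w : ℕ} (hw : w ∈ betaBranch Ga Gb φ v)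
    (hlw : l ∈ Gb.label w) :
    v ∈ (betaSum Ga Gb Gq φ P).verts ∧ l ∈ (betaSum Ga Gb Gq φ P).label v := by
  obtain ⟨p, hp, hlp⟩ := mem_unionOf_label.1 hl
  suffices BetaPiece Ga Gb Gq φ p from
    ⟨mem_unionOf_verts.2 ⟨p, ⟨hp, this⟩, mem_verts_of_mem_label_of_mem_pcs (c.subset_pcs hp) hlp⟩,
      mem_unionOf_label.2 ⟨p, ⟨hp, this⟩, hlp⟩⟩
  rcases mem_pcs.1 (c.subset_pcs hp) with ⟨v', -, i', hv'i, rfl⟩ | ⟨v', -, i', hv'i, l', -, rfl⟩ |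
    ⟨u', v', i', j', -, -, -, rfl⟩ | ⟨C, hC, rfl⟩
  · exact absurd (mem_singlePc_label.1 hlp).2 (Set.notMem_empty l)
  · obtain ⟨rfl, rfl⟩ := mem_singlePc_label.1 hlp
    refine betaPiece_singlePc hv'i (c.exists_bnd_of_rmap_mem hv hv'i hw) ?_
    rintro _ rfl
    exact ⟨w, hw, hlw⟩
  · exact absurd hlp notMem_edgePc_label
  · exact c.betaPiece_compPc_of_mem hC hp (mem_compPc_label.1 hlp).1 hw

lemma betaSum_adj (c : PieceModel t Ga Gb Gq P φ) (huv : (unionOf P).Adj u v) {w w' : ℕ}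
    (hw : w ∈ betaBranch Ga Gb φ u) (hw' : w' ∈ betaBranch Ga Gb φ v) (hww' : Gb.Adj w w') :
    u ∈ (betaSum Ga Gb Gq φ P).verts ∧ v ∈ (betaSum Ga Gb Gq φ P).verts ∧
      (betaSum Ga Gb Gq φ P).Adj u v := by
  obtain ⟨p, hp, hpuv⟩ := unionOf_adj.1 huv
  suffices BetaPiece Ga Gb Gq φ p by
    obtain ⟨hu, hv⟩ := mem_verts_of_adj_of_mem_pcs (c.subset_pcs hp) hpuv
    exact ⟨mem_unionOf_verts.2 ⟨p, ⟨hp, this⟩, hu⟩, mem_unionOf_verts.2 ⟨p, ⟨hp, this⟩, hv⟩,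
      unionOf_adj.2 ⟨p, ⟨hp, this⟩, hpuv⟩⟩
  rcases mem_pcs.1 (c.subset_pcs hp) with ⟨v', -, i', -, rfl⟩ | ⟨v', -, i', -, l', -, rfl⟩ |
    ⟨u', v', i', j', -, hu'i, hv'j, rfl⟩ | ⟨C, hC, rfl⟩
  · exact absurd hpuv singlePc_not_adj
  · exact absurd hpuv singlePc_not_adj
  · rcases edgePc_adj.1 hpuv with ⟨rfl, rfl⟩ | ⟨rfl, rfl⟩
    · exact c.betaPiece_edgePc_of_mem hp hu'i hv'j hw hw' hww'
    · exact c.betaPiece_edgePc_of_mem hp hu'i hv'j hw' hw (c.wf_right.adj_symm hww')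
  · rcases compPc_adj_mem hpuv with hu | hv
    · exact c.betaPiece_compPc_of_mem hC hp hu hw
    · exact c.betaPiece_compPc_of_mem hC hp hv hw'

end PieceModel

def recombinedBranch (Ga Gb' : BLG X) (φ ψ : ℕ → Set ℕ) (B : Set ℕ) (v : ℕ) : Set ℕ :=
  {a | a ∈ φ v ∧ a % 2 = 0} ∪ {a | v ∈ B ∧ a ∈ rmap Ga Gb' '' ψ v}

namespace PieceModel

variable {t : ℕ} {Ga Gb Gb' Gq : BLG X} {P : Set (BLG X)} {φ ψ : ℕ → Set ℕ} {u v : ℕ}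

/-- The two parts of a recombined branch set meet in the boundary vertex of the branch set. -/
lemma exists_rmap_mem_of_even (c : PieceModel t Ga Gb Gq P φ)
    (hψ : MinorModel (betaSum Ga Gb Gq φ P) Gb' ψ) (hv : v ∈ (unionOf P).verts)
    (hvβ : v ∈ (betaSum Ga Gb Gq φ P).verts) {e : ℕ} (he : e ∈ φ v)
    (hee : e % 2 = 0) : ∃ w ∈ ψ v, rmap Ga Gb' w ∈ φ v ∧ rmap Ga Gb' w % 2 = 0 := by
  obtain ⟨i, hvi⟩ : ∃ i, Gq.bnd v = some i := by
    cases hvb : Gq.bnd v with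
    | none => have := odd_of_mem_betaSum hvβ hvb he; omega
    | some i => exact ⟨i, rfl⟩
  obtain ⟨g, hg, hgi⟩ := (c.model.bnd_some v hv i ((c.bnd_eq hv).trans hvi)).2
  have hgv := c.model.sub v hv hg
  have hge := c.even_of_mem_bnd hv hg (by simp [hgi]) he hee
  obtain ⟨hg2, hg2'⟩ := mem_glue_of_even hgv hge
  have hGa : Ga.bnd (g / 2) = some i := (glue_bnd_of_even hgv hge).symm.trans hgi
  obtain ⟨w, hw, hwi⟩ := (hψ.bnd_some v hvβ i ((c.betaSum_bnd hvβ).trans hvi)).2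
  refine ⟨w, hw, ?_⟩
  rw [rmap_eq_of_bnd c.wf_left hg2 hGa hwi, ← hg2']
  exact ⟨hg, hge⟩

lemma recombinedBranch_nonempty (c : PieceModel t Ga Gb Gq P φ)
    (hψ : MinorModel (betaSum Ga Gb Gq φ P) Gb' ψ) (hv : v ∈ (unionOf P).verts) :
    (recombinedBranch Ga Gb' φ ψ (betaSum Ga Gb Gq φ P).verts v).Nonempty := by
  by_cases he : ∃ a ∈ φ v, a % 2 = 0
  · obtain ⟨a, ha, hae⟩ := he
    exact ⟨a, Or.inl ⟨ha, hae⟩⟩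
  · have hvβ := c.mem_betaSum_of_odd hv fun a ha => by
      by_contra hao
      exact he ⟨a, ha, by omega⟩
    obtain ⟨w, hw⟩ := hψ.nonempty v hvβ
    exact ⟨_, Or.inr ⟨hvβ, w, hw, rfl⟩⟩

lemma recombinedBranch_reachIn (c : PieceModel t Ga Gb Gq P φ) (hGb' : Gb'.WF t)
    (hψ : MinorModel (betaSum Ga Gb Gq φ P) Gb' ψ) (hv : v ∈ (unionOf P).verts)
    {x y : ℕ} (hx : x ∈ recombinedBranch Ga Gb' φ ψ (betaSum Ga Gb Gq φ P).verts v)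
    (hy : y ∈ recombinedBranch Ga Gb' φ ψ (betaSum Ga Gb Gq φ P).verts v) :
    ReachIn (glue Ga Gb')
      (recombinedBranch Ga Gb' φ ψ (betaSum Ga Gb Gq φ P).verts v) x y := by
  have hE : ∀ {a b}, a ∈ φ v → a % 2 = 0 → b ∈ φ v → b % 2 = 0 → ReachIn (glue Ga Gb')
      (recombinedBranch Ga Gb' φ ψ (betaSum Ga Gb Gq φ P).verts v) a b :=
    fun ha hae hb hbe => ((c.model.conn v hv _ ha _ hb).glue_even c.wf_left c.wf_right
      (c.bnd_subsingleton hv) ha hae hbe).mono_set fun _ h => Or.inl h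
  have hR : ∀ {w w'}, v ∈ (betaSum Ga Gb Gq φ P).verts → w ∈ ψ v → w' ∈ ψ v →
      ReachIn (glue Ga Gb')
        (recombinedBranch Ga Gb' φ ψ (betaSum Ga Gb Gq φ P).verts v)
        (rmap Ga Gb' w) (rmap Ga Gb' w') :=
    fun hvβ hw hw' => (hψ.reachIn_glue_rmap hvβ hw hw').mono_set fun _ h => Or.inr ⟨hvβ, h⟩
  have hER : ∀ {a w}, a ∈ φ v → a % 2 = 0 → v ∈ (betaSum Ga Gb Gq φ P).verts →
      w ∈ ψ v → ReachIn (glue Ga Gb')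
        (recombinedBranch Ga Gb' φ ψ (betaSum Ga Gb Gq φ P).verts v) a
        (rmap Ga Gb' w) := fun ha hae hvβ hw => by
    obtain ⟨w₀, hw₀, hw₀φ, hw₀e⟩ := c.exists_rmap_mem_of_even hψ hv hvβ ha hae
    exact (hE ha hae hw₀φ hw₀e).trans (hR hvβ hw₀ hw)
  rcases hx with ⟨hx, hxe⟩ | ⟨hvβ, w, hw, rfl⟩ <;>
    rcases hy with ⟨hy, hye⟩ | ⟨hvβ', w', hw', rfl⟩
  · exact hE hx hxe hy hye
  · exact hER hx hxe hvβ' hw'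
  · exact (hER hy hye hvβ hw).symm fun _ _ => glue_adj_symm c.wf_left hGb'
  · exact hR hvβ hw hw'

lemma eq_of_rmap_mem (c : PieceModel t Ga Gb Gq P φ)
    (hψ : MinorModel (betaSum Ga Gb Gq φ P) Gb' ψ) (hu : u ∈ (unionOf P).verts)
    (hvβ : v ∈ (betaSum Ga Gb Gq φ P).verts) {w : ℕ} (hw : w ∈ ψ v)
    (hwu : rmap Ga Gb' w ∈ φ u) (hwe : rmap Ga Gb' w % 2 = 0) : u = v := by
  obtain ⟨u₁, hu₁, ⟨j, hwj, hu₁j⟩, hwu₁⟩ := (rmap_mod_two_eq_zero_iff.1 hwe).exists_rmap_eq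
  have hv := mem_of_mem_betaSum hvβ
  have huj : (unionOf P).bnd u = some j := c.model.bnd_eq_some hu hwu
    (by rw [hwu₁, glue_bnd_two_mul hu₁, hu₁j])
  have hvj : (unionOf P).bnd v = some j := (c.bnd_eq hv).trans
    ((c.betaSum_bnd hvβ).symm.trans (hψ.bnd_eq_some hvβ hw hwj))
  exact c.model.eq_of_bnd_eq (glue_bnd_inj c.wf_left c.wf_right) hu hv huj hvj

lemma recombinedBranch_disjoint (c : PieceModel t Ga Gb Gq P φ) (hGb' : Gb'.WF t)
    (hψ : MinorModel (betaSum Ga Gb Gq φ P) Gb' ψ) (hu : u ∈ (unionOf P).verts)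
    (hv : v ∈ (unionOf P).verts) (huv : u ≠ v) :
    Disjoint (recombinedBranch Ga Gb' φ ψ (betaSum Ga Gb Gq φ P).verts u)
      (recombinedBranch Ga Gb' φ ψ (betaSum Ga Gb Gq φ P).verts v) := by
  rw [Set.disjoint_left]
  rintro z (⟨hzu, hze⟩ | ⟨huβ, w, hw, rfl⟩) (⟨hzv, hze'⟩ | ⟨hvβ, w', hw', hww'⟩)
  · exact Set.disjoint_left.1 (c.model.disj u hu v hv huv) hzu hzv
  · subst hww'
    exact huv (c.eq_of_rmap_mem hψ hu hvβ hw' hzu hze)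
  · exact huv (c.eq_of_rmap_mem hψ hv huβ hw hzv hze').symm
  · obtain rfl := rmap_injective hGb' hww'
    exact Set.disjoint_left.1 (hψ.disj u huβ v hvβ huv) hw hw'

lemma recombinedBranch_bnd (c : PieceModel t Ga Gb Gq P φ)
    (hψ : MinorModel (betaSum Ga Gb Gq φ P) Gb' ψ) (hv : v ∈ (unionOf P).verts)
    {z : ℕ} (hz : z ∈ recombinedBranch Ga Gb' φ ψ (betaSum Ga Gb Gq φ P).verts v) :
    (glue Ga Gb').bnd z = none ∨ (glue Ga Gb').bnd z = (unionOf P).bnd v := by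
  rcases hz with ⟨hz, hze⟩ | ⟨hvβ, w, hw, rfl⟩
  · rw [(glue_congr_of_even (c.model.sub v hv hz) hze).2]
    exact c.model.bnd_cases hv hz
  · rw [glue_bnd_rmap (hψ.sub v hvβ hw), c.bnd_eq (mem_of_mem_betaSum hvβ),
      ← c.betaSum_bnd hvβ]
    exact hψ.bnd_cases hvβ hw

lemma exists_recombinedBranch_bnd (c : PieceModel t Ga Gb Gq P φ)
    (hψ : MinorModel (betaSum Ga Gb Gq φ P) Gb' ψ) (hv : v ∈ (unionOf P).verts)
    {i : ℕ} (hvi : (unionOf P).bnd v = some i) :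
    ∃ z ∈ recombinedBranch Ga Gb' φ ψ (betaSum Ga Gb Gq φ P).verts v,
      (glue Ga Gb').bnd z = some i := by
  by_cases hvβ : v ∈ (betaSum Ga Gb Gq φ P).verts
  · obtain ⟨w, hw, hwi⟩ := (hψ.bnd_some v hvβ i
      ((c.betaSum_bnd hvβ).trans ((c.bnd_eq hv).symm.trans hvi))).2
    exact ⟨_, Or.inr ⟨hvβ, w, hw, rfl⟩, by rw [glue_bnd_rmap (hψ.sub v hvβ hw), hwi]⟩
  · obtain ⟨g, hg, hgi⟩ := (c.model.bnd_some v hv i hvi).2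
    have hge : g % 2 = 0 := by
      by_contra hgo
      refine hvβ (c.mem_betaSum_of_odd hv fun a ha => ?_)
      by_contra hao
      exact hgo (c.even_of_mem_bnd hv hg (by simp [hgi]) ha (by omega))
    exact ⟨g, Or.inl ⟨hg, hge⟩, by rw [(glue_congr_of_even (c.model.sub v hv hg) hge).2, hgi]⟩

lemma recombinedModel (c : PieceModel t Ga Gb Gq P φ) (hGb' : Gb'.WF t)
    (hψ : MinorModel (betaSum Ga Gb Gq φ P) Gb' ψ) :
    MinorModel (unionOf P) (glue Ga Gb')
      (recombinedBranch Ga Gb' φ ψ (betaSum Ga Gb Gq φ P).verts) := by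
  refine ⟨?_, fun v hv => c.recombinedBranch_nonempty hψ hv,
    fun v hv x hx y hy => c.recombinedBranch_reachIn hGb' hψ hv hx hy,
    fun u hu v hv huv => c.recombinedBranch_disjoint hGb' hψ hu hv huv, ?_,
    fun v hv hvb z hz => (c.recombinedBranch_bnd hψ hv hz).elim id (·.trans hvb),
    fun v hv i hvi => ⟨fun z hz => (c.recombinedBranch_bnd hψ hv hz).imp_right (·.trans hvi),
      c.exists_recombinedBranch_bnd hψ hv hvi⟩, ?_⟩
  · rintro v hv z (⟨hz, hze⟩ | ⟨hvβ, w, hw, rfl⟩)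
    · exact (glue_congr_of_even (c.model.sub v hv hz) hze).1
    · exact rmap_mem_glue (hψ.sub v hvβ hw)
  · intro u hu v hv huv
    obtain ⟨a, ha, b, hb, hab⟩ := c.model.edge u hu v hv huv
    rcases hab with ⟨x, hx, y, hy, hxy, rfl, rfl⟩ | ⟨w, hw, w', hw', hww', rfl, rfl⟩
    · exact ⟨_, Or.inl ⟨ha, by omega⟩, _, Or.inl ⟨hb, by omega⟩, glue_adj_two_mul hx hy hxy⟩
    · obtain ⟨huβ, hvβ, hβ⟩ := c.betaSum_adj huv ⟨hw, ha⟩ ⟨hw', hb⟩ hww'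
      obtain ⟨x, hx, y, hy, hxy⟩ := hψ.edge u huβ v hvβ hβ
      exact ⟨_, Or.inr ⟨huβ, x, hx, rfl⟩, _, Or.inr ⟨hvβ, y, hy, rfl⟩,
        glue_adj_rmap (hψ.sub u huβ hx) (hψ.sub v hvβ hy) hxy⟩
  · intro v hv l hl
    obtain ⟨a, ha, hla⟩ := c.model.labels v hv l hl
    rcases hla with ⟨x, hx, rfl, hlx⟩ | ⟨w, hw, rfl, hlw⟩
    · exact ⟨_, Or.inl ⟨ha, by omega⟩, Or.inl ⟨x, hx, rfl, hlx⟩⟩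
    · obtain ⟨hvβ, hlβ⟩ := c.mem_betaSum_label hv hl ⟨hw, ha⟩ hlw
      obtain ⟨w', hw', hlw'⟩ := hψ.labels v hvβ l hlβ
      exact ⟨_, Or.inr ⟨hvβ, w', hw', rfl⟩, Or.inr ⟨w', hψ.sub v hvβ hw', rfl, hlw'⟩⟩

end PieceModel

lemma folioStar_glue_subset {t : ℕ} {Q : Set (BLG X)} {Ga Gb Gb' : BLG X} (hGa : Ga.WF t)
    (hGb : Gb.WF t) (hGb' : Gb'.WF t) (h : folioStar Q t Gb ⊆ folioStar Q t Gb') :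
    folioStar Q t (glue Ga Gb) ⊆ folioStar Q t (glue Ga Gb') := by
  rintro H ⟨hHQ, hHG⟩
  obtain ⟨Gq, hGq, P, hP, -, hHP⟩ := mem_mpcsPlus.1 hHQ
  obtain ⟨φ, hφ⟩ := hHG.of_iso hHP.symm
  have c : PieceModel t Ga Gb Gq P φ := ⟨hGa, hGb, hP, hφ⟩
  obtain ⟨ψ, hψ⟩ : Minor (betaSum Ga Gb Gq φ P) Gb' := by
    rcases (betaPieces Ga Gb Gq φ P).eq_empty_or_nonempty with hβ | hβ
    · exact ⟨_, hβ ▸ minorModel_unionOf_empty Gb'⟩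
    · exact (h ⟨mem_mpcsPlus.2 ⟨Gq, hGq, _, betaPieces_subset.trans hP, hβ, .refl _⟩,
        _, c.betaModel⟩).2
  exact ⟨hHQ, Minor.of_iso hHP ⟨_, c.recombinedModel hGb' hψ⟩⟩

theorem stmt19_general {X : Type} (t : ℕ) (Q : Set (BLG X))
    (Ga Gb1 Gb2 : BLG X) (ha : Ga.WF t) (hb1 : Gb1.WF t) (hb2 : Gb2.WF t) :
    (folioStar Q t Gb1 ⊆ folioStar Q t Gb2 →
      folioStar Q t (glue Ga Gb1) ⊆ folioStar Q t (glue Ga Gb2)) ∧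
    (folioStar Q t Gb1 = folioStar Q t Gb2 →
      folioStar Q t (glue Ga Gb1) = folioStar Q t (glue Ga Gb2)) :=
  ⟨folioStar_glue_subset ha hb1 hb2, fun h =>
    (folioStar_glue_subset ha hb1 hb2 h.le).antisymm (folioStar_glue_subset ha hb2 hb1 h.ge)⟩

/-- For a set `Q` of connected `X`-labeled graphs and `t`-boundaried
`X`-labeled graphs `Gα, Gβ1, Gβ2` with `folio*_{Q,t}(Gβ1) ⊆ folio*_{Q,t}(Gβ2)`, we get
`folio*_{Q,t}(Gα ⊕ Gβ1) ⊆ folio*_{Q,t}(Gα ⊕ Gβ2)`; moreover equality of the folios of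
`Gβ1` and `Gβ2` yields equality after gluing. -/
theorem stmt19 {X : Type} (t : ℕ) (Q : Set (BLG X))
    (hQ : ∀ q ∈ Q, q.WF 0 ∧ q.Conn)
    (Ga Gb1 Gb2 : BLG X) (ha : Ga.WF t) (hb1 : Gb1.WF t) (hb2 : Gb2.WF t) :
    (folioStar Q t Gb1 ⊆ folioStar Q t Gb2 →
      folioStar Q t (glue Ga Gb1) ⊆ folioStar Q t (glue Ga Gb2)) ∧
    (folioStar Q t Gb1 = folioStar Q t Gb2 →
      folioStar Q t (glue Ga Gb1) = folioStar Q t (glue Ga Gb2)) :=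
  stmt19_general t Q Ga Gb1 Gb2 ha hb1 hb2

end

end FDel
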